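/- arXiv:math/0307077 — 9 statements merged into one kernel-verified Lean document; each statement's English description precedes it below -/
import Mathlib

section
/- Let V be an abstract Seifert matrix of size 2g. If V is metabolic, then there exist a polynomial f ∈ ℤ[t] of degree at most g and a sign ε ∈ {1, −1} such that the Alexander polynomial satisfies Δ_V(t) = ε · f(t) · f*(t), where f*(t) = t^g · f(1/t) is the degree-g reflection of f (so Δ_V(t) = ± t^n f(t) f(t^{-1}) as a product of a Laurent unit with f(t)f(t^{-1})). -/
open Matrix Polynomial

lemma reflect_prod_card {ι : Type*} (s : Finset ι) (p : ι → Polynomial ℤ)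
    (h : ∀ i, (p i).natDegree ≤ 1) :
    Polynomial.reflect s.card (∏ i ∈ s, p i) = ∏ i ∈ s, Polynomial.reflect 1 (p i) := by
  classical
  induction s using Finset.cons_induction with
  | empty => simp
  | cons a s ha ih =>
    rw [Finset.prod_cons, Finset.prod_cons, Finset.card_cons]
    have hs : (∏ i ∈ s, p i).natDegree ≤ s.card := by
      refine (Polynomial.natDegree_prod_le s p).trans ?_
      calc ∑ i ∈ s, (p i).natDegree ≤ ∑ _i ∈ s, 1 := Finset.sum_le_sum (fun i _ => h i)
        _ = s.card := by simp
    rw [show s.card + 1 = 1 + s.card from Nat.add_comm _ _,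
      Polynomial.reflect_mul (p a) _ (h a) hs, ih]

lemma reflect_det {k : ℕ} (M : Matrix (Fin k) (Fin k) (Polynomial ℤ))
    (h : ∀ i j, (M i j).natDegree ≤ 1) :
    Polynomial.reflect k M.det = (Matrix.of fun i j => Polynomial.reflect 1 (M i j)).det := by
  classical
  rw [Matrix.det_apply', Matrix.det_apply']
  have hr : ∀ (x y : Polynomial ℤ), Polynomial.reflect k (x + y)
      = Polynomial.reflect k x + Polynomial.reflect k y := fun x y => reflect_add x y k
  rw [show Polynomial.reflect k = ⇑(AddMonoidHom.mk' (Polynomial.reflect k) hr) from rfl,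
    map_sum]
  refine Finset.sum_congr rfl fun σ _ => ?_
  show Polynomial.reflect k (((Equiv.Perm.sign σ : ℤ) : Polynomial ℤ) * ∏ i, M (σ i) i) = _
  rw [← Polynomial.C_eq_intCast, Polynomial.reflect_C_mul, Polynomial.C_eq_intCast]
  congr 1
  have := reflect_prod_card (Finset.univ : Finset (Fin k)) (fun i => M (σ i) i)
    (fun i => h _ _)
  simpa using this


/-- An abstract Seifert matrix: `V - Vᵀ` is unimodular. -/
def SeifertMatrix {m : ℕ} (V : Matrix (Fin m) (Fin m) ℤ) : Prop :=
  (V - Vᵀ).det = 1 ∨ (V - Vᵀ).det = -1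

/-- A square integer matrix of size `m` is metabolic if the associated bilinear form
vanishes on a direct summand of `ℤ^m` of rank `m/2`. -/
def Metabolic {m : ℕ} (V : Matrix (Fin m) (Fin m) ℤ) : Prop :=
  ∃ L : Submodule ℤ (Fin m → ℤ), (∃ L' : Submodule ℤ (Fin m → ℤ), IsCompl L L') ∧
    2 * Module.finrank ℤ L = m ∧
    ∀ x ∈ L, ∀ y ∈ L, x ⬝ᵥ V.mulVec y = 0

/-- The Alexander polynomial `det (V - t Vᵀ)`. -/
noncomputable def alexPoly {m : ℕ} (V : Matrix (Fin m) (Fin m) ℤ) : Polynomial ℤ :=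
  (V.map (C : ℤ → Polynomial ℤ) - (X : Polynomial ℤ) • Vᵀ.map (C : ℤ → Polynomial ℤ)).det

/-- Block-diagonal direct sum of square matrices. -/
def dsum {a b : ℕ} (V : Matrix (Fin a) (Fin a) ℤ) (W : Matrix (Fin b) (Fin b) ℤ) :
    Matrix (Fin (a + b)) (Fin (a + b)) ℤ :=
  Matrix.reindex finSumFinEquiv finSumFinEquiv (Matrix.fromBlocks V 0 0 W)

/-- `n`-fold block-diagonal direct sum of copies of `V`. -/
def nsum {a : ℕ} (V : Matrix (Fin a) (Fin a) ℤ) (n : ℕ) : Matrix (Fin (a * n)) (Fin (a * n)) ℤ :=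
  Matrix.reindex finProdFinEquiv finProdFinEquiv (Matrix.blockDiagonal fun _ : Fin n => V)

/-- The hermitian matrix `(1/2)(1-ω)V + (1/2)(1-conj ω)Vᵀ`. -/
noncomputable def omegaForm {m : ℕ} (V : Matrix (Fin m) (Fin m) ℤ) (ω : ℂ) :
    Matrix (Fin m) (Fin m) ℂ :=
  ((1 - ω) / 2) • (V.map (Int.cast : ℤ → ℂ)) +
    ((1 - (starRingEnd ℂ) ω) / 2) • (Vᵀ.map (Int.cast : ℤ → ℂ))

lemma det_block_factor {g : ℕ} (U : Matrix (Fin g ⊕ Fin g) (Fin g ⊕ Fin g) ℤ)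
    (hU0 : ∀ i j : Fin g, U (Sum.inl i) (Sum.inl j) = 0) :
    ∃ (f : Polynomial ℤ) (ε : ℤ), (ε = 1 ∨ ε = -1) ∧ f.natDegree ≤ g ∧
      (U.map (C : ℤ → Polynomial ℤ)
        - (X : Polynomial ℤ) • Uᵀ.map (C : ℤ → Polynomial ℤ)).det
        = C ε * (f * Polynomial.reflect g f) := by
  classical
  let B1 : Matrix (Fin g) (Fin g) (Polynomial ℤ) :=
    Matrix.of fun i j => C (U (Sum.inl i) (Sum.inr j)) - X * C (U (Sum.inr j) (Sum.inl i))
  let C1 : Matrix (Fin g) (Fin g) (Polynomial ℤ) :=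
    Matrix.of fun i j => C (U (Sum.inr i) (Sum.inl j)) - X * C (U (Sum.inl j) (Sum.inr i))
  let D1 : Matrix (Fin g) (Fin g) (Polynomial ℤ) :=
    Matrix.of fun i j => C (U (Sum.inr i) (Sum.inr j)) - X * C (U (Sum.inr j) (Sum.inr i))
  have hblocks : U.map (C : ℤ → Polynomial ℤ)
      - (X : Polynomial ℤ) • Uᵀ.map (C : ℤ → Polynomial ℤ)
      = Matrix.fromBlocks 0 B1 C1 D1 := by
    ext s t
    rcases s with i | i <;> rcases t with j | j <;>
      simp only [Matrix.sub_apply, Matrix.smul_apply, Matrix.map_apply, Matrix.transpose_apply,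
        smul_eq_mul, Matrix.fromBlocks_apply₁₁, Matrix.fromBlocks_apply₁₂,
        Matrix.fromBlocks_apply₂₁, Matrix.fromBlocks_apply₂₂, Matrix.of_apply,
        Matrix.zero_apply, B1, C1, D1]
    · rw [hU0, hU0]; simp
  let σ : Equiv.Perm (Fin g ⊕ Fin g) := Equiv.sumComm (Fin g) (Fin g)
  have hswap : Matrix.fromBlocks (0 : Matrix (Fin g) (Fin g) (Polynomial ℤ)) B1 C1 D1
      = (Matrix.fromBlocks C1 D1 0 B1).submatrix σ id := by
    ext s t
    rcases s with i | i <;> rcases t with j | j <;> simp [σ]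
  have hdet3 : (Matrix.fromBlocks (0 : Matrix (Fin g) (Fin g) (Polynomial ℤ)) B1 C1 D1).det
      = ((Equiv.Perm.sign σ : ℤ) : Polynomial ℤ) * (C1.det * B1.det) := by
    rw [hswap, Matrix.det_permute, Matrix.det_fromBlocks_zero₂₁]
  have hdeg1 : ∀ i j, (B1 i j).natDegree ≤ 1 := by
    intro i j
    refine (Polynomial.natDegree_sub_le _ _).trans ?_
    simp only [Polynomial.natDegree_C]
    refine max_le (Nat.zero_le _) ((Polynomial.natDegree_mul_le).trans ?_)
    simp [Polynomial.natDegree_X]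
  have hfdeg : B1.det.natDegree ≤ g := by
    have hB1eq : B1 = (X : Polynomial ℤ) •
        (Matrix.of fun i j => -(U (Sum.inr j) (Sum.inl i))).map (C : ℤ → Polynomial ℤ)
        + (Matrix.of fun i j => U (Sum.inl i) (Sum.inr j)).map (C : ℤ → Polynomial ℤ) := by
      ext i j
      simp [B1, Matrix.smul_apply, smul_eq_mul, sub_eq_add_neg, map_neg]
      ring
    rw [hB1eq]
    simpa using Polynomial.natDegree_det_X_add_C_le
      (Matrix.of fun i j => -(U (Sum.inr j) (Sum.inl i)))
      (Matrix.of fun i j => U (Sum.inl i) (Sum.inr j))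
  have hent : ∀ i j, Polynomial.reflect 1 (B1 i j) = -(C1 j i) := by
    intro i j
    show Polynomial.reflect 1 (C (U (Sum.inl i) (Sum.inr j)) - X * C (U (Sum.inr j) (Sum.inl i)))
      = -(C (U (Sum.inr j) (Sum.inl i)) - X * C (U (Sum.inl i) (Sum.inr j)))
    rw [Polynomial.reflect_sub, Polynomial.reflect_C, mul_comm X (C (U (Sum.inr j) (Sum.inl i))),
      Polynomial.reflect_C_mul, Polynomial.reflect_one_X]
    ring
  have hrefl : Polynomial.reflect g B1.det = ((-1 : Polynomial ℤ))^g * C1.det := by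
    rw [reflect_det B1 hdeg1]
    have h2 : (Matrix.of fun i j => Polynomial.reflect 1 (B1 i j)) = (-C1)ᵀ := by
      ext i j
      simp [hent i j]
    rw [h2, Matrix.det_transpose, Matrix.det_neg]
    simp
  have h11 : ((-1 : Polynomial ℤ))^g * ((-1 : Polynomial ℤ))^g = 1 := by
    rw [← mul_pow]; norm_num
  have hC1det : C1.det = ((-1 : Polynomial ℤ))^g * Polynomial.reflect g B1.det := by
    rw [hrefl, ← mul_assoc, h11, one_mul]
  have heps : ((Equiv.Perm.sign σ : ℤ) * (-1)^g = 1)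
      ∨ ((Equiv.Perm.sign σ : ℤ) * (-1)^g = -1) := by
    rcases Int.units_eq_one_or (Equiv.Perm.sign σ) with h | h <;>
      rcases Nat.even_or_odd g with hg | hg <;>
      simp [h, hg.neg_one_pow]
  refine ⟨B1.det, (Equiv.Perm.sign σ : ℤ) * (-1)^g, heps, hfdeg, ?_⟩
  rw [hblocks, hdet3, hC1det]
  have hCe : (C ((Equiv.Perm.sign σ : ℤ) * (-1)^g) : Polynomial ℤ)
      = ((Equiv.Perm.sign σ : ℤ) : Polynomial ℤ) * ((-1 : Polynomial ℤ))^g := by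
    rcases Int.units_eq_one_or (Equiv.Perm.sign σ) with h | h <;> rw [h] <;>
      simp
  rw [hCe]
  ring

/-- Fox–Milnor condition: the Alexander polynomial of a metabolic Seifert
matrix of size `2g` factors as `± f(t) · (t^g f(1/t))` with `deg f ≤ g`. -/
theorem stmt_0 {g : ℕ} (V : Matrix (Fin (2 * g)) (Fin (2 * g)) ℤ)
    (hV : SeifertMatrix V) (hM : Metabolic V) :
    ∃ (f : Polynomial ℤ) (ε : ℤ), (ε = 1 ∨ ε = -1) ∧ f.natDegree ≤ g ∧
      alexPoly V = C ε * (f * Polynomial.reflect g f) := by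
  classical
  obtain ⟨L, ⟨L', hc⟩, hrank, hvan⟩ := hM
  haveI : Module.Finite ℤ L := inferInstance
  haveI : Module.Finite ℤ L' := inferInstance
  haveI : Module.Free ℤ L := inferInstance
  haveI : Module.Free ℤ L' := inferInstance
  have hgL : Module.finrank ℤ L = g := by omega
  have hsum : Module.finrank ℤ L + Module.finrank ℤ L' = 2 * g := by
    have := (Submodule.prodEquivOfIsCompl L L' hc).finrank_eq
    rw [Module.finrank_prod] at this
    simpa [Module.finrank_pi] using this
  have hgL' : Module.finrank ℤ L' = g := by omega
  let bL : Module.Basis (Fin g) ℤ L := Module.finBasisOfFinrankEq ℤ L hgL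
  let bL' : Module.Basis (Fin g) ℤ L' := Module.finBasisOfFinrankEq ℤ L' hgL'
  let b : Module.Basis (Fin g ⊕ Fin g) ℤ (Fin (2*g) → ℤ) :=
    (bL.prod bL').map (Submodule.prodEquivOfIsCompl L L' hc)
  have hmemL : ∀ i : Fin g, b (Sum.inl i) ∈ L := by
    intro i
    have h1 : (bL.prod bL') (Sum.inl i) = (bL i, (0 : L')) :=
      Prod.ext (bL.prod_apply_inl_fst bL' i) (bL.prod_apply_inl_snd bL' i)
    have h2 : b (Sum.inl i) = Submodule.prodEquivOfIsCompl L L' hc (bL i, (0 : L')) := by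
      rw [Module.Basis.map_apply, h1]
    rw [h2]
    have h3 : Submodule.prodEquivOfIsCompl L L' hc (bL i, (0 : L')) = (bL i : Fin (2*g) → ℤ) := by
      have := congrFun (congrArg (fun (f : ↥L × ↥L' →ₗ[ℤ] (Fin (2*g) → ℤ)) => f.toFun)
        (Submodule.coe_prodEquivOfIsCompl L L' hc)) (bL i, (0 : L'))
      simpa using this
    rw [h3]
    exact (bL i).2
  let e : Fin (2*g) ≃ (Fin g ⊕ Fin g) := (finCongr (two_mul g)).trans finSumFinEquiv.symm
  let c : Module.Basis (Fin (2*g)) ℤ (Fin (2*g) → ℤ) := b.reindex e.symm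
  have hce : ∀ s : Fin g ⊕ Fin g, c (e.symm s) = b s := by
    intro s; simp [c, Module.Basis.reindex_apply]
  let P : Matrix (Fin (2*g)) (Fin (2*g)) ℤ := (Pi.basisFun ℤ (Fin (2*g))).toMatrix c
  have hP : ∀ k j, P k j = c j k := by
    intro k j
    simp [P, Module.Basis.toMatrix_apply]
  have hdpu : IsUnit P.det := by
    have h1 : P * c.toMatrix (Pi.basisFun ℤ (Fin (2*g))) = 1 :=
      Module.Basis.toMatrix_mul_toMatrix_flip _ _
    have := congrArg Matrix.det h1
    rw [Matrix.det_mul, Matrix.det_one] at this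
    exact IsUnit.of_mul_eq_one _ this
  have hdp2 : P.det * P.det = 1 := by
    rcases Int.isUnit_iff.mp hdpu with h | h <;> rw [h] <;> norm_num
  let W : Matrix (Fin (2*g)) (Fin (2*g)) ℤ := Pᵀ * V * P
  have hWab : ∀ a bb : Fin (2*g), W a bb = (fun k => P k a) ⬝ᵥ V.mulVec (fun l => P l bb) := by
    intro a bb
    simp only [W, Matrix.mul_apply, Matrix.mulVec, dotProduct, Matrix.transpose_apply,
      Finset.sum_mul, Finset.mul_sum]
    rw [Finset.sum_comm]
    exact Finset.sum_congr rfl fun k _ => Finset.sum_congr rfl fun l _ => by ring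
  have hW0 : ∀ i j : Fin g, W (e.symm (Sum.inl i)) (e.symm (Sum.inl j)) = 0 := by
    intro i j
    rw [hWab]
    have hca : ∀ s : Fin g ⊕ Fin g,
        (fun k => P k (e.symm s)) = (b s : Fin (2*g) → ℤ) := by
      intro s; funext k; rw [hP, hce]
    rw [hca, hca]
    exact hvan _ (hmemL i) _ (hmemL j)
  let N : Matrix (Fin (2*g)) (Fin (2*g)) (Polynomial ℤ) :=
    V.map (C : ℤ → Polynomial ℤ) - (X : Polynomial ℤ) • Vᵀ.map (C : ℤ → Polynomial ℤ)
  let Pc := P.map (C : ℤ → Polynomial ℤ)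
  have hkey : Pcᵀ * N * Pc
      = W.map (C : ℤ → Polynomial ℤ) - (X : Polynomial ℤ) • Wᵀ.map (C : ℤ → Polynomial ℤ) := by
    have hWt : Wᵀ = Pᵀ * Vᵀ * P := by
      simp [W, Matrix.transpose_mul, Matrix.mul_assoc]
    simp only [N, Pc, W, hWt, Matrix.sub_mul, Matrix.mul_sub, Matrix.smul_mul, Matrix.mul_smul,
      Matrix.map_mul, Matrix.transpose_map]
  have hdetN : N.det = (Pcᵀ * N * Pc).det := by
    rw [Matrix.det_mul, Matrix.det_mul, Matrix.det_transpose]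
    have hPc : Pc.det = C P.det := (RingHom.map_det (C : ℤ →+* Polynomial ℤ) P).symm
    rw [hPc, mul_comm (C P.det) N.det, mul_assoc, ← Polynomial.C_mul, hdp2,
      Polynomial.C_1, mul_one]
  let U : Matrix (Fin g ⊕ Fin g) (Fin g ⊕ Fin g) ℤ := W.submatrix e.symm e.symm
  have hU0 : ∀ i j : Fin g, U (Sum.inl i) (Sum.inl j) = 0 := fun i j => hW0 i j
  have hsub : (W.map (C : ℤ → Polynomial ℤ)
      - (X : Polynomial ℤ) • Wᵀ.map (C : ℤ → Polynomial ℤ)).submatrix e.symm e.symm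
      = U.map (C : ℤ → Polynomial ℤ)
        - (X : Polynomial ℤ) • Uᵀ.map (C : ℤ → Polynomial ℤ) := by
    ext s t
    rfl
  obtain ⟨f, ε, hε, hdeg, hfac⟩ := det_block_factor U hU0
  refine ⟨f, ε, hε, hdeg, ?_⟩
  have : alexPoly V = N.det := rfl
  rw [this, hdetN, hkey, ← Matrix.det_submatrix_equiv_self e.symm, hsub, hfac]
end

section
/- (Cancellation for Seifert forms.) Let V be an abstract Seifert matrix of size 2g and W an abstract Seifert matrix of size 2h. If V is metabolic and the block-diagonal direct sum V ⊕ W is metabolic, then W is metabolic. -/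
open Matrix Polynomial

namespace SKaux

open Module Submodule LinearMap

noncomputable section


/-- coordinatewise `Int.cast` as a `ℤ`-linear map. -/
def cmap (m : ℕ) : (Fin m → ℤ) →ₗ[ℤ] (Fin m → ℚ) where
  toFun x := fun i => (x i : ℚ)
  map_add' x y := by funext i; simp only [Pi.add_apply]; push_cast; rfl
  map_smul' k x := by
    funext i
    simp only [Pi.smul_apply, smul_eq_mul, RingHom.id_apply, zsmul_eq_mul]
    push_cast; ring

lemma cmap_apply {m : ℕ} (x : Fin m → ℤ) (i : Fin m) : cmap m x i = (x i : ℚ) := rfl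

lemma cmap_injective (m : ℕ) : Function.Injective (cmap m) := by
  intro x y hxy
  funext i
  have : (x i : ℚ) = (y i : ℚ) := congrFun hxy i
  exact_mod_cast this

lemma cmap_eq_comp {m : ℕ} (x : Fin m → ℤ) : cmap m x = ⇑(Int.castRingHom ℚ) ∘ x := rfl

/-- key rank bridge -/
lemma finrank_span_cmap {m : ℕ} (L : Submodule ℤ (Fin m → ℤ)) :
    finrank ℚ (span ℚ ((cmap m) '' (L : Set (Fin m → ℤ)))) = finrank ℤ L := by
  haveI : Module.Finite ℤ L := Module.Finite.iff_fg.mpr (IsNoetherian.noetherian L)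
  let b : Basis (Fin (finrank ℤ L)) ℤ L := Module.finBasis ℤ L
  set w : Fin (finrank ℤ L) → (Fin m → ℚ) := fun i => cmap m (b i) with hw
  have hindZ : LinearIndependent ℤ w := by
    have h1 : LinearIndependent ℤ fun i => ((cmap m).comp L.subtype) (b i) :=
      b.linearIndependent.map' _ (by
        rw [ker_eq_bot]
        exact (cmap_injective m).comp L.injective_subtype)
    exact h1
  have hindQ : LinearIndependent ℚ w :=
    hindZ.localization ℚ (nonZeroDivisors ℤ)
  have h2 : span ℤ (⇑L.subtype '' Set.range ⇑b) = L := by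
    have h0 := b.span_eq
    have h2 : Submodule.map L.subtype (span ℤ (Set.range b)) = Submodule.map L.subtype ⊤ := by
      rw [h0]
    rwa [Submodule.map_span, Submodule.map_top, Submodule.range_subtype] at h2
  have hsets : (cmap m) '' (⇑L.subtype '' Set.range ⇑b) = Set.range w := by
    rw [← Set.range_comp, ← Set.range_comp]; rfl
  have hspan : span ℚ ((cmap m) '' (L : Set (Fin m → ℤ))) = span ℚ (Set.range w) := by
    apply le_antisymm
    · rw [Submodule.span_le]
      rintro _ ⟨x, hx, rfl⟩
      have hx2 : x ∈ span ℤ (⇑L.subtype '' Set.range ⇑b) := by rw [h2]; exact hx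
      have hmem : cmap m x ∈ Submodule.map (cmap m) (span ℤ (⇑L.subtype '' Set.range ⇑b)) :=
        Submodule.mem_map_of_mem hx2
      rw [Submodule.map_span, hsets] at hmem
      exact span_subset_span ℤ ℚ _ hmem
    · rw [Submodule.span_le]
      rintro _ ⟨i, rfl⟩
      exact Submodule.subset_span ⟨(b i : Fin m → ℤ), (b i).2, rfl⟩
  rw [hspan, finrank_span_eq_card hindQ, Fintype.card_fin]

lemma span_cmap_comap {m : ℕ} (Lq : Submodule ℚ (Fin m → ℚ)) :
    span ℚ ((cmap m) '' (((Lq.restrictScalars ℤ).comap (cmap m) : Submodule ℤ (Fin m → ℤ)) :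
      Set (Fin m → ℤ))) = Lq := by
  apply le_antisymm
  · rw [span_le]
    rintro _ ⟨x, hx, rfl⟩
    exact hx
  · intro v hv
    set d : ℤ := ∏ i, ((v i).den : ℤ) with hd
    have hd0 : d ≠ 0 := by
      rw [hd]
      apply Finset.prod_ne_zero_iff.mpr
      intro i _
      exact_mod_cast (v i).den_nz
    have key : ∀ i : Fin m, ∃ z : ℤ, (z : ℚ) = (d : ℚ) * v i := by
      intro i
      have hdvd : ((v i).den : ℤ) ∣ d := Finset.dvd_prod_of_mem _ (Finset.mem_univ i)
      obtain ⟨e, he⟩ := hdvd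
      refine ⟨e * (v i).num, ?_⟩
      have hden0 : (((v i).den : ℚ)) ≠ 0 := by exact_mod_cast (v i).den_nz
      have hnum : v i * ((v i).den : ℚ) = ((v i).num : ℚ) :=
        (eq_div_iff hden0).mp (Rat.num_div_den (v i)).symm
      push_cast
      rw [he]
      push_cast
      rw [← hnum]
      ring
    choose x hx using key
    have hcx : cmap m x = (d : ℚ) • v := by
      funext i
      simp only [cmap, LinearMap.coe_mk, AddHom.coe_mk, Pi.smul_apply, smul_eq_mul]
      exact hx i
    have hxL : x ∈ (Lq.restrictScalars ℤ).comap (cmap m) := by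
      simp only [Submodule.mem_comap, Submodule.restrictScalars_mem, hcx]
      exact Lq.smul_mem _ hv
    have hmem : cmap m x ∈ span ℚ ((cmap m) '' (((Lq.restrictScalars ℤ).comap (cmap m) :
        Submodule ℤ (Fin m → ℤ)) : Set (Fin m → ℤ))) :=
      subset_span ⟨x, hxL, rfl⟩
    have : ((d : ℚ))⁻¹ • ((d : ℚ) • v) = v := by
      rw [smul_smul, inv_mul_cancel₀ (by exact_mod_cast hd0), one_smul]
    rw [← this, ← hcx]
    exact Submodule.smul_mem _ _ hmem

lemma metabolic_of_rat {m : ℕ} (A : Matrix (Fin m) (Fin m) ℤ)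
    (Lq : Submodule ℚ (Fin m → ℚ)) (hrk : 2 * finrank ℚ Lq = m)
    (hvan : ∀ x ∈ Lq, ∀ y ∈ Lq, x ⬝ᵥ (A.map (Int.cast : ℤ → ℚ)).mulVec y = 0) :
    Metabolic A := by
  set L : Submodule ℤ (Fin m → ℤ) := (Lq.restrictScalars ℤ).comap (cmap m) with hL
  have hmemL : ∀ x, x ∈ L ↔ cmap m x ∈ Lq := by
    intro x
    simp [hL, Submodule.mem_comap]
  refine ⟨L, ?_, ?_, ?_⟩
  · -- complement
    haveI : NoZeroSMulDivisors ℤ ((Fin m → ℤ) ⧸ L) := by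
      constructor
      intro c q hcq
      by_cases hc : c = 0
      · left; exact hc
      · right
        obtain ⟨x, rfl⟩ := L.mkQ_surjective q
        have : L.mkQ (c • x) = 0 := by rw [LinearMap.map_smul]; exact hcq
        rw [← LinearMap.mem_ker, Submodule.ker_mkQ] at this
        have hcx : (c : ℚ) • cmap m x ∈ Lq := by
          rw [Int.cast_smul_eq_zsmul, ← LinearMap.map_smul]
          exact (hmemL _).mp this
        have hx : cmap m x ∈ Lq := by
          have := Lq.smul_mem ((c : ℚ))⁻¹ hcx
          rwa [smul_smul, inv_mul_cancel₀ (by exact_mod_cast hc), one_smul] at this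
        have : x ∈ L := (hmemL _).mpr hx
        rw [← Submodule.ker_mkQ L, LinearMap.mem_ker] at this
        simp [Submodule.mkQ_apply] at this ⊢
        exact this
    haveI : Module.Finite ℤ ((Fin m → ℤ) ⧸ L) :=
      Module.Finite.of_surjective L.mkQ L.mkQ_surjective
    obtain ⟨s, hs⟩ := Module.projective_lifting_property L.mkQ LinearMap.id L.mkQ_surjective
    refine ⟨LinearMap.range s, ?_, ?_⟩
    · rw [disjoint_def]
      rintro x hxL ⟨q, rfl⟩
      have h1 : L.mkQ (s q) = 0 := by
        rw [← LinearMap.mem_ker, Submodule.ker_mkQ]; exact hxL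
      have h2 : L.mkQ (s q) = q := congr($hs q)
      rw [h2] at h1
      rw [h1, map_zero]
    · rw [codisjoint_iff_le_sup]
      intro x _
      have h1 : x - s (L.mkQ x) ∈ L := by
        have h0 : L.mkQ (x - s (L.mkQ x)) = 0 := by
          rw [map_sub]
          have h00 : L.mkQ (s (L.mkQ x)) = L.mkQ x := congr($hs (L.mkQ x))
          rw [h00, sub_self]
        rw [Submodule.mkQ_apply] at h0
        exact (Submodule.Quotient.mk_eq_zero L).mp h0
      have h3 : (x - s (L.mkQ x)) + s (L.mkQ x) ∈ L ⊔ LinearMap.range s :=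
        Submodule.add_mem _ (Submodule.mem_sup_left h1)
          (Submodule.mem_sup_right ⟨L.mkQ x, rfl⟩)
      rwa [sub_add_cancel] at h3
  · -- rank
    have h1 := finrank_span_cmap ((Lq.restrictScalars ℤ).comap (cmap m))
    rw [span_cmap_comap] at h1
    rw [hL, ← h1]
    exact hrk
  · -- vanishing
    intro x hx y hy
    have hcast : (Int.castRingHom ℚ) (x ⬝ᵥ A.mulVec y) =
        (cmap m x) ⬝ᵥ (A.map (Int.cast : ℤ → ℚ)).mulVec (cmap m y) := by
      rw [RingHom.map_dotProduct, cmap_eq_comp, cmap_eq_comp]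
      congr 1
      funext i
      exact RingHom.map_mulVec (Int.castRingHom ℚ) A y i
    have h0 := hvan _ ((hmemL x).mp hx) _ ((hmemL y).mp hy)
    rw [h0, eq_intCast] at hcast
    exact_mod_cast hcast



/-- inclusion of the first factor -/
def jinl (a b : ℕ) : (Fin a → ℚ) →ₗ[ℚ] ((Fin a ⊕ Fin b) → ℚ) where
  toFun x := Sum.elim x 0
  map_add' x y := by funext s; cases s <;> simp
  map_smul' c x := by funext s; cases s <;> simp

lemma field_core {a b : ℕ} (A : Matrix (Fin a) (Fin a) ℚ) (B : Matrix (Fin b) (Fin b) ℚ)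
    (hA : (A - Aᵀ).det ≠ 0) (hB : (B - Bᵀ).det ≠ 0)
    (N : Submodule ℚ (Fin a → ℚ)) (hNrk : 2 * finrank ℚ N = a)
    (hNv : ∀ x ∈ N, ∀ y ∈ N, x ⬝ᵥ A.mulVec y = 0)
    (M : Submodule ℚ ((Fin a ⊕ Fin b) → ℚ)) (hMrk : 2 * finrank ℚ M = a + b)
    (hMv : ∀ x ∈ M, ∀ y ∈ M, x ⬝ᵥ (fromBlocks A 0 0 B).mulVec y = 0) :
    ∃ P : Submodule ℚ (Fin b → ℚ), 2 * finrank ℚ P = b ∧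
      ∀ x ∈ P, ∀ y ∈ P, x ⬝ᵥ B.mulVec y = 0 := by
  classical
  set D : Matrix (Fin a ⊕ Fin b) (Fin a ⊕ Fin b) ℚ := fromBlocks A 0 0 B with hDdef
  -- block formula for the bilinear pairing
  have hsum : ∀ x : (Fin a ⊕ Fin b) → ℚ, Sum.elim (x ∘ Sum.inl) (x ∘ Sum.inr) = x := by
    intro x; funext s; cases s <;> rfl
  have hDblk : ∀ u₁ v₁ u₂ v₂, (Sum.elim u₁ u₂) ⬝ᵥ D.mulVec (Sum.elim v₁ v₂) =
      u₁ ⬝ᵥ A.mulVec v₁ + u₂ ⬝ᵥ B.mulVec v₂ := by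
    intro u₁ v₁ u₂ v₂
    rw [hDdef, fromBlocks_mulVec]
    simp [sumElim_dotProduct_sumElim]
  have hD' : ∀ x y : (Fin a ⊕ Fin b) → ℚ, x ⬝ᵥ D.mulVec y =
      (x ∘ Sum.inl) ⬝ᵥ A.mulVec (y ∘ Sum.inl) + (x ∘ Sum.inr) ⬝ᵥ B.mulVec (y ∘ Sum.inr) := by
    intro x y
    conv_lhs => rw [← hsum x, ← hsum y]
    exact hDblk _ _ _ _
  -- the bilinear forms
  set Θ : LinearMap.BilinForm ℚ ((Fin a ⊕ Fin b) → ℚ) := Matrix.toBilin' D with hΘdef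
  set Λ : LinearMap.BilinForm ℚ ((Fin a ⊕ Fin b) → ℚ) := Matrix.toBilin' (D - Dᵀ) with hΛdef
  have hΘ : ∀ x y, Θ x y = x ⬝ᵥ D.mulVec y := fun x y => Matrix.toBilin'_apply' _ _ _
  have hΛ : ∀ x y, Λ x y = Θ x y - Θ y x := by
    intro x y
    rw [hΛdef, Matrix.toBilin'_apply', hΘ, hΘ, Matrix.sub_mulVec, dotProduct_sub]
    congr 1
    rw [Matrix.mulVec_transpose, dotProduct_comm, ← Matrix.dotProduct_mulVec]
  have halt : Λ.IsAlt := fun x => by rw [hΛ, sub_self]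
  have hrefl : Λ.IsRefl := halt.isRefl
  have hdet : (D - Dᵀ).det ≠ 0 := by
    have hblk : D - Dᵀ = fromBlocks (A - Aᵀ) 0 0 (B - Bᵀ) := by
      rw [hDdef, fromBlocks_transpose]
      ext (i | i) (j | j) <;> simp [fromBlocks]
    rw [hblk, det_fromBlocks_zero₁₂]
    exact mul_ne_zero hA hB
  have hnd : Λ.Nondegenerate := (Matrix.nondegenerate_of_det_ne_zero hdet).toBilin'
  -- ambient dimension
  have hEtot : finrank ℚ ((Fin a ⊕ Fin b) → ℚ) = a + b := by
    rw [Module.finrank_pi]; simp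
  -- projections and kernels
  set q1 : ((Fin a ⊕ Fin b) → ℚ) →ₗ[ℚ] (Fin a → ℚ) := LinearMap.funLeft ℚ ℚ Sum.inl with hq1def
  set q2 : ((Fin a ⊕ Fin b) → ℚ) →ₗ[ℚ] (Fin b → ℚ) := LinearMap.funLeft ℚ ℚ Sum.inr with hq2def
  set E1 : Submodule ℚ ((Fin a ⊕ Fin b) → ℚ) := LinearMap.ker q2 with hE1def
  set E2 : Submodule ℚ ((Fin a ⊕ Fin b) → ℚ) := LinearMap.ker q1 with hE2def
  have hq1surj : Function.Surjective q1 :=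
    LinearMap.funLeft_surjective_of_injective ℚ ℚ _ Sum.inl_injective
  have hq2surj : Function.Surjective q2 :=
    LinearMap.funLeft_surjective_of_injective ℚ ℚ _ Sum.inr_injective
  have hpib : finrank ℚ (Fin b → ℚ) = b := by rw [Module.finrank_pi, Fintype.card_fin]
  have hpia : finrank ℚ (Fin a → ℚ) = a := by rw [Module.finrank_pi, Fintype.card_fin]
  have hE1rk : finrank ℚ E1 = a := by
    have h0 := LinearMap.finrank_range_add_finrank_ker q2
    rw [LinearMap.range_eq_top.mpr hq2surj, finrank_top, hpib, hEtot, ← hE1def] at h0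
    omega
  have hE2rk : finrank ℚ E2 = b := by
    have h0 := LinearMap.finrank_range_add_finrank_ker q1
    rw [LinearMap.range_eq_top.mpr hq1surj, finrank_top, hpia, hEtot, ← hE2def] at h0
    omega
  have hE1E2 : E1 ⊓ E2 = ⊥ := by
    rw [eq_bot_iff]
    rintro z ⟨hz1, hz2⟩
    have h1 : z ∘ Sum.inr = 0 := hz1
    have h2 : z ∘ Sum.inl = 0 := hz2
    have : z = 0 := by
      funext s
      cases s with
      | inl i => exact congrFun h2 i
      | inr i => exact congrFun h1 i
    simp [this]
  -- the image of N
  have hjinj : Function.Injective (jinl a b) := by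
    intro x y hxy
    funext i
    exact congrFun hxy (Sum.inl i)
  set N' : Submodule ℚ ((Fin a ⊕ Fin b) → ℚ) := N.map (jinl a b) with hN'def
  have hN'rk : finrank ℚ N' = finrank ℚ N :=
    (Submodule.equivMapOfInjective _ hjinj N).finrank_eq.symm
  have hN'E1 : N' ≤ E1 := by
    rintro _ ⟨ν, hν, rfl⟩
    show (jinl a b) ν ∘ Sum.inr = 0
    rfl
  have hmemN' : ∀ z ∈ N', z ∘ Sum.inl ∈ N ∧ z ∘ Sum.inr = 0 := by
    rintro _ ⟨ν, hν, rfl⟩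
    exact ⟨hν, rfl⟩
  have hsupinl : ∀ z ∈ N' ⊔ E2, z ∘ Sum.inl ∈ N := by
    intro z hz
    rw [Submodule.mem_sup] at hz
    obtain ⟨n, hn, e, he, rfl⟩ := hz
    have h1 : (n + e) ∘ Sum.inl = n ∘ Sum.inl + e ∘ Sum.inl := rfl
    have h2 : e ∘ Sum.inl = 0 := he
    rw [h1, h2, add_zero]
    exact (hmemN' n hn).1
  -- Θ vanishes pairwise between N' ⊔ E2 elements whose inl parts are in N... key vanish lemma
  have hΘvan : ∀ z w : (Fin a ⊕ Fin b) → ℚ, z ∘ Sum.inl ∈ N → w ∘ Sum.inl ∈ N →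
      z ∘ Sum.inr = 0 ∨ w ∘ Sum.inr = 0 → Θ z w = 0 := by
    intro z w hz hw hzw
    rw [hΘ, hD', hNv _ hz _ hw, zero_add]
    rcases hzw with h | h
    · rw [h, zero_dotProduct]
    · rw [h, Matrix.mulVec_zero, dotProduct_zero]
  -- orthogonal of M is M
  have hOM : Λ.orthogonal M = M := by
    have le1 : M ≤ Λ.orthogonal M := by
      intro x hx
      rw [LinearMap.BilinForm.mem_orthogonal_iff]
      intro n hn
      rw [hΛ, hΘ, hΘ, hMv _ hn _ hx, hMv _ hx _ hn, sub_self]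
    have hfr : finrank ℚ (Λ.orthogonal M) = finrank ℚ M := by
      rw [LinearMap.BilinForm.finrank_orthogonal hnd, hEtot]
      omega
    exact (Submodule.eq_of_le_of_finrank_eq le1 hfr.symm).symm
  -- orthogonal of N' is N' ⊔ E2
  have hON : Λ.orthogonal N' = N' ⊔ E2 := by
    have le1 : N' ⊔ E2 ≤ Λ.orthogonal N' := by
      apply sup_le
      · intro x hx
        rw [LinearMap.BilinForm.mem_orthogonal_iff]
        intro n hn
        rw [hΛ]
        rw [hΘvan _ _ (hmemN' n hn).1 (hmemN' x hx).1 (Or.inl (hmemN' n hn).2),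
          hΘvan _ _ (hmemN' x hx).1 (hmemN' n hn).1 (Or.inr (hmemN' n hn).2), sub_self]
      · intro x hx
        rw [LinearMap.BilinForm.mem_orthogonal_iff]
        intro n hn
        have hx0 : x ∘ Sum.inl = 0 := hx
        rw [hΛ, hΘ, hΘ, hD', hD',
          (hmemN' n hn).2, hx0]
        simp
    have hsuprk : finrank ℚ (N' ⊔ E2 : Submodule ℚ _) = finrank ℚ N + b := by
      have hinf : N' ⊓ E2 = ⊥ := by
        rw [eq_bot_iff, ← hE1E2]
        exact inf_le_inf_right _ hN'E1
      have := Submodule.finrank_sup_add_finrank_inf_eq N' E2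
      rw [hinf, hN'rk, hE2rk] at this
      simpa using this
    have hfr : finrank ℚ (Λ.orthogonal N') = finrank ℚ (N' ⊔ E2 : Submodule ℚ _) := by
      rw [LinearMap.BilinForm.finrank_orthogonal hnd, hEtot, hsuprk, hN'rk]
      omega
    exact (Submodule.eq_of_le_of_finrank_eq le1 hfr.symm).symm
  -- orthogonal of sup
  have horthsup : Λ.orthogonal (M ⊔ N') = Λ.orthogonal M ⊓ Λ.orthogonal N' := by
    apply le_antisymm
    · apply le_inf
      · intro z hz
        rw [LinearMap.BilinForm.mem_orthogonal_iff] at hz ⊢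
        intro n hn
        exact hz n (Submodule.mem_sup_left hn)
      · intro z hz
        rw [LinearMap.BilinForm.mem_orthogonal_iff] at hz ⊢
        intro n hn
        exact hz n (Submodule.mem_sup_right hn)
    · intro z hz
      rw [Submodule.mem_inf] at hz
      obtain ⟨hz1, hz2⟩ := hz
      rw [LinearMap.BilinForm.mem_orthogonal_iff] at hz1 hz2 ⊢
      intro n hn
      rw [Submodule.mem_sup] at hn
      obtain ⟨p, hp, q, hq, rfl⟩ := hn
      have h1 := hz1 p hp
      have h2 := hz2 q hq
      rw [map_add, LinearMap.add_apply, h1, h2, add_zero]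
  -- the intersection
  have hS : Λ.orthogonal (M ⊔ N') = M ⊓ (N' ⊔ E2) := by rw [horthsup, hOM, hON]
  -- rank computations
  have eq3 : finrank ℚ (M ⊔ N' : Submodule ℚ _) +
      finrank ℚ (M ⊓ (N' ⊔ E2) : Submodule ℚ _) = a + b := by
    rw [← hS, LinearMap.BilinForm.finrank_orthogonal hnd, hEtot]
    have hle := Submodule.finrank_le (M ⊔ N' : Submodule ℚ _)
    rw [hEtot] at hle
    omega
  have eq4 : finrank ℚ (M ⊔ N' : Submodule ℚ _) + finrank ℚ (M ⊓ N' : Submodule ℚ _) =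
      finrank ℚ M + finrank ℚ N := by
    rw [Submodule.finrank_sup_add_finrank_inf_eq, hN'rk]
  -- the metabolizer for B
  refine ⟨Submodule.map q2 (M ⊓ (N' ⊔ E2)), ?_, ?_⟩
  · -- rank
    have hrn := LinearMap.finrank_range_add_finrank_ker (q2.comp (M ⊓ (N' ⊔ E2)).subtype)
    have hrange : LinearMap.range (q2.comp (M ⊓ (N' ⊔ E2)).subtype) =
        Submodule.map q2 (M ⊓ (N' ⊔ E2)) := by
      rw [LinearMap.range_comp, Submodule.range_subtype]
    have hE1S : (M ⊓ (N' ⊔ E2)) ⊓ (LinearMap.ker q2) = M ⊓ N' := by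
      rw [← hE1def, inf_assoc, sup_inf_assoc_of_le E2 hN'E1,
        inf_comm E2 E1, hE1E2, sup_bot_eq]
    have hkerrk : finrank ℚ (LinearMap.ker (q2.comp (M ⊓ (N' ⊔ E2)).subtype)) =
        finrank ℚ (M ⊓ N' : Submodule ℚ _) := by
      rw [LinearMap.ker_comp]
      have h1 : finrank ℚ (Submodule.comap (M ⊓ (N' ⊔ E2)).subtype (LinearMap.ker q2)) =
          finrank ℚ (Submodule.map (M ⊓ (N' ⊔ E2)).subtype
            (Submodule.comap (M ⊓ (N' ⊔ E2)).subtype (LinearMap.ker q2))) :=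
        (Submodule.finrank_map_subtype_eq (M ⊓ (N' ⊔ E2)) _).symm
      rw [h1, Submodule.map_comap_subtype, hE1S]
    rw [hrange, hkerrk] at hrn
    omega
  · -- vanishing
    rintro _ ⟨x, hxS, rfl⟩ _ ⟨y, hyS, rfl⟩
    obtain ⟨hxM, hxsup⟩ := Submodule.mem_inf.mp hxS
    obtain ⟨hyM, hysup⟩ := Submodule.mem_inf.mp hyS
    have h0 := hMv _ hxM _ hyM
    rw [hD', hNv _ (hsupinl x hxsup) _ (hsupinl y hysup), zero_add] at h0
    show (x ∘ Sum.inr) ⬝ᵥ B.mulVec (y ∘ Sum.inr) = 0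
    exact h0

lemma rat_of_metabolic {m : ℕ} (A : Matrix (Fin m) (Fin m) ℤ) (hA : Metabolic A) :
    ∃ Lq : Submodule ℚ (Fin m → ℚ), 2 * finrank ℚ Lq = m ∧
      ∀ x ∈ Lq, ∀ y ∈ Lq, x ⬝ᵥ (A.map (Int.cast : ℤ → ℚ)).mulVec y = 0 := by
  obtain ⟨L, _, hrk, hvan⟩ := hA
  refine ⟨span ℚ ((cmap m) '' (L : Set (Fin m → ℤ))), ?_, ?_⟩
  · rw [finrank_span_cmap]; exact hrk
  · set Θ : LinearMap.BilinForm ℚ (Fin m → ℚ) :=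
      Matrix.toBilin' (A.map (Int.cast : ℤ → ℚ)) with hΘdef
    have hΘ : ∀ x y, Θ x y = x ⬝ᵥ (A.map (Int.cast : ℤ → ℚ)).mulVec y :=
      fun x y => Matrix.toBilin'_apply' _ _ _
    have hset : ∀ x ∈ (cmap m) '' (L : Set (Fin m → ℤ)),
        ∀ y ∈ (cmap m) '' (L : Set (Fin m → ℤ)), Θ x y = 0 := by
      rintro _ ⟨x, hx, rfl⟩ _ ⟨y, hy, rfl⟩
      rw [hΘ]
      have hcast : (Int.castRingHom ℚ) (x ⬝ᵥ A.mulVec y) =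
          (cmap m x) ⬝ᵥ (A.map (Int.cast : ℤ → ℚ)).mulVec (cmap m y) := by
        rw [RingHom.map_dotProduct, cmap_eq_comp, cmap_eq_comp]
        congr 1
        funext i
        exact RingHom.map_mulVec (Int.castRingHom ℚ) A y i
      rw [← hcast, hvan _ hx _ hy, map_zero]
    have h1 : ∀ x ∈ (cmap m) '' (L : Set (Fin m → ℤ)),
        ∀ y ∈ span ℚ ((cmap m) '' (L : Set (Fin m → ℤ))), Θ x y = 0 := by
      intro x hx y hy
      have hle : span ℚ ((cmap m) '' (L : Set (Fin m → ℤ))) ≤ LinearMap.ker (Θ x) :=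
        Submodule.span_le.mpr (fun z hz => LinearMap.mem_ker.mpr (hset x hx z hz))
      exact hle hy
    intro x hx y hy
    rw [← hΘ]
    have hle : span ℚ ((cmap m) '' (L : Set (Fin m → ℤ))) ≤ LinearMap.ker (Θ.flip y) :=
      Submodule.span_le.mpr (fun z hz => LinearMap.mem_ker.mpr (h1 z hz y hy))
    exact hle hx

lemma transport {g h : ℕ} (V : Matrix (Fin (2*g)) (Fin (2*g)) ℤ)
    (W : Matrix (Fin (2*h)) (Fin (2*h)) ℤ)
    (Lq : Submodule ℚ (Fin (2*g+2*h) → ℚ)) (hrk : 2 * finrank ℚ Lq = 2*g+2*h)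
    (hv : ∀ x ∈ Lq, ∀ y ∈ Lq, x ⬝ᵥ ((dsum V W).map (Int.cast : ℤ → ℚ)).mulVec y = 0) :
    ∃ Mq : Submodule ℚ ((Fin (2*g) ⊕ Fin (2*h)) → ℚ), 2 * finrank ℚ Mq = 2*g + 2*h ∧
      ∀ x ∈ Mq, ∀ y ∈ Mq,
        x ⬝ᵥ (fromBlocks (V.map (Int.cast : ℤ → ℚ)) 0 0
          (W.map (Int.cast : ℤ → ℚ))).mulVec y = 0 := by
  classical
  set e := (finSumFinEquiv : Fin (2*g) ⊕ Fin (2*h) ≃ Fin (2*g + 2*h)) with hedef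
  set D' : Matrix (Fin (2*g) ⊕ Fin (2*h)) (Fin (2*g) ⊕ Fin (2*h)) ℚ :=
    fromBlocks (V.map (Int.cast : ℤ → ℚ)) 0 0 (W.map (Int.cast : ℤ → ℚ)) with hD'def
  have hmap : (dsum V W).map (Int.cast : ℤ → ℚ) = Matrix.reindex e e D' := by
    ext i j
    rw [Matrix.map_apply, Matrix.reindex_apply, Matrix.submatrix_apply, hD'def]
    show (((Matrix.reindex e e (fromBlocks V 0 0 W)) i j : ℤ) : ℚ) = _
    rw [Matrix.reindex_apply, Matrix.submatrix_apply]
    rcases e.symm i with i' | i' <;> rcases e.symm j with j' | j' <;>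
      simp [Matrix.fromBlocks]
  have hkey : ∀ x y : Fin (2*g+2*h) → ℚ,
      x ⬝ᵥ ((dsum V W).map (Int.cast : ℤ → ℚ)).mulVec y = (x ∘ e) ⬝ᵥ D'.mulVec (y ∘ e) := by
    intro x y
    rw [hmap, Matrix.reindex_apply, Matrix.submatrix_mulVec_equiv]
    rw [Equiv.symm_symm]
    exact dotProduct_comp_equiv_symm _ _ _
  set ε : (Fin (2*g+2*h) → ℚ) ≃ₗ[ℚ] ((Fin (2*g) ⊕ Fin (2*h)) → ℚ) :=
    LinearEquiv.funCongrLeft ℚ ℚ e with hεdef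
  have hεapp : ∀ x : Fin (2*g+2*h) → ℚ, ε x = x ∘ e := fun x => rfl
  refine ⟨Lq.map (ε : (Fin (2*g+2*h) → ℚ) →ₗ[ℚ] ((Fin (2*g) ⊕ Fin (2*h)) → ℚ)), ?_, ?_⟩
  · rw [LinearEquiv.finrank_map_eq]
    exact hrk
  · rintro _ ⟨x, hx, rfl⟩ _ ⟨y, hy, rfl⟩
    have h0 := hv _ hx _ hy
    rw [hkey] at h0
    exact h0

end

end SKaux

/-- Cancellation for Seifert forms: if `V` and `V ⊕ W` are metabolic,
then so is `W`. -/
theorem stmt_1 {g h : ℕ} (V : Matrix (Fin (2 * g)) (Fin (2 * g)) ℤ)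
    (W : Matrix (Fin (2 * h)) (Fin (2 * h)) ℤ)
    (hV : SeifertMatrix V) (hW : SeifertMatrix W)
    (hMV : Metabolic V) (hMVW : Metabolic (dsum V W)) :
    Metabolic W := by
  classical
  open SKaux Module Submodule in
  -- pass to ℚ
  obtain ⟨Nq, hNrk, hNv⟩ := SKaux.rat_of_metabolic V hMV
  obtain ⟨Lq, hLrk, hLv⟩ := SKaux.rat_of_metabolic (dsum V W) hMVW
  obtain ⟨Mq, hMrk, hMv⟩ := SKaux.transport V W Lq hLrk hLv
  have hdet : ∀ {k : ℕ} (U : Matrix (Fin k) (Fin k) ℤ), SeifertMatrix U →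
      ((U.map (Int.cast : ℤ → ℚ)) - (U.map (Int.cast : ℤ → ℚ))ᵀ).det ≠ 0 := by
    intro k U hU
    have h1 : (U.map (Int.cast : ℤ → ℚ)) - (U.map (Int.cast : ℤ → ℚ))ᵀ =
        (U - Uᵀ).map (Int.cast : ℤ → ℚ) := by
      ext i j
      simp [Matrix.map_apply, Matrix.sub_apply]
    have h2 : ((U - Uᵀ).map (Int.cast : ℤ → ℚ)).det = (((U - Uᵀ).det : ℤ) : ℚ) := by
      have h3 := (Int.castRingHom ℚ).map_det (U - Uᵀ)
      rw [RingHom.mapMatrix_apply, eq_intCast, Int.coe_castRingHom] at h3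
      exact h3.symm
    rw [h1, h2]
    rcases hU with h | h <;> rw [h] <;> norm_num
  obtain ⟨P, hPrk, hPv⟩ := SKaux.field_core (V.map (Int.cast : ℤ → ℚ))
    (W.map (Int.cast : ℤ → ℚ)) (hdet V hV) (hdet W hW) Nq hNrk hNv Mq hMrk hMv
  exact SKaux.metabolic_of_rat W P hPrk hPv
end

section
/- Let V be a metabolic abstract Seifert matrix of size 2g, and let ω be a unit complex number with ω ≠ 1 such that Δ_V(ω) ≠ 0. Then the complex matrix V_ω = (1/2)(1−ω)V + (1/2)(1−conj(ω))Vᵀ is a nonsingular Hermitian matrix, and its signature is 0: it has exactly g positive eigenvalues and exactly g negative eigenvalues. (Hence each Levine–Tristram signature σ_ω vanishes on metabolic Seifert forms.) -/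
open Matrix Polynomial

namespace SigAux

variable {n : ℕ}

/-- dot product with a finite sum of scaled vectors. -/
lemma dot_sum_smul {ι : Type*} [Fintype ι] (w : Fin n → ℂ) (c : ι → ℂ) (y : ι → Fin n → ℂ) :
    w ⬝ᵥ (∑ j, c j • y j) = ∑ j, c j * (w ⬝ᵥ y j) := by
  simp only [dotProduct, Finset.sum_apply, Pi.smul_apply, smul_eq_mul, Finset.mul_sum,
    Finset.sum_mul]
  rw [Finset.sum_comm]
  exact Finset.sum_congr rfl fun j _ => Finset.sum_congr rfl fun i _ => by ring

lemma sum_smul_dot {ι : Type*} [Fintype ι] (w : Fin n → ℂ) (c : ι → ℂ) (y : ι → Fin n → ℂ) :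
    (∑ j, c j • y j) ⬝ᵥ w = ∑ j, c j * (y j ⬝ᵥ w) := by
  simp only [dotProduct, Finset.sum_apply, Pi.smul_apply, smul_eq_mul, Finset.sum_mul]
  rw [Finset.sum_comm]
  exact Finset.sum_congr rfl fun j _ => by rw [Finset.mul_sum]; exact Finset.sum_congr rfl fun i _ => by ring

lemma star_sum_smul {ι : Type*} [Fintype ι] (c : ι → ℂ) (y : ι → Fin n → ℂ) :
    star (∑ j, c j • y j) = ∑ j, (starRingEnd ℂ) (c j) • star (y j) := by
  simp [star_smul]

lemma mulVec_sum {ι : Type*} [Fintype ι] (M : Matrix (Fin n) (Fin n) ℂ) (f : ι → Fin n → ℂ) :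
    M *ᵥ (∑ j, f j) = ∑ j, M *ᵥ f j := by
  ext i
  simp [Matrix.mulVec, dotProduct, Finset.sum_apply, Finset.mul_sum]
  exact Finset.sum_comm

lemma B_sum_sum {ι κ : Type*} [Fintype ι] [Fintype κ] (M : Matrix (Fin n) (Fin n) ℂ)
    (a : ι → ℂ) (x : ι → Fin n → ℂ) (b : κ → ℂ) (y : κ → Fin n → ℂ) :
    star (∑ i, a i • x i) ⬝ᵥ (M *ᵥ (∑ j, b j • y j)) =
      ∑ i, ∑ j, (starRingEnd ℂ) (a i) * b j * (star (x i) ⬝ᵥ (M *ᵥ y j)) := by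
  rw [star_sum_smul, sum_smul_dot]
  refine Finset.sum_congr rfl fun i _ => ?_
  have : M *ᵥ (∑ j, b j • y j) = ∑ j, b j • (M *ᵥ y j) := by
    rw [mulVec_sum (M := M) (f := fun j => b j • y j)]
    exact Finset.sum_congr rfl fun j _ => by rw [Matrix.mulVec_smul]
  rw [this, dot_sum_smul, Finset.mul_sum]
  exact Finset.sum_congr rfl fun j _ => by ring

/-- vanishing of a sesquilinear matrix form on a span. -/
lemma B_vanish_span (M : Matrix (Fin n) (Fin n) ℂ) (s : Set (Fin n → ℂ))
    (h : ∀ x ∈ s, ∀ y ∈ s, star x ⬝ᵥ (M *ᵥ y) = 0) :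
    ∀ x ∈ Submodule.span ℂ s, ∀ y ∈ Submodule.span ℂ s, star x ⬝ᵥ (M *ᵥ y) = 0 := by
  have hright : ∀ x : Fin n → ℂ, (∀ y ∈ s, star x ⬝ᵥ (M *ᵥ y) = 0) →
      ∀ y ∈ Submodule.span ℂ s, star x ⬝ᵥ (M *ᵥ y) = 0 := by
    intro x hx y hy
    induction hy using Submodule.span_induction with
    | mem z hz => exact hx z hz
    | zero => simp
    | add z w _ _ hz hw => rw [Matrix.mulVec_add, dotProduct_add, hz, hw, add_zero]
    | smul c z _ hz => rw [Matrix.mulVec_smul, dotProduct_smul, hz, smul_zero]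
  intro x hx y hy
  induction hx using Submodule.span_induction with
  | mem z hz => exact hright z (h z hz) y hy
  | zero => simp
  | add z w _ _ hz hw => rw [star_add, add_dotProduct, hz, hw, add_zero]
  | smul c z _ hz => rw [star_smul, smul_dotProduct, hz, smul_zero]


lemma cast_dotProduct (x y : Fin n → ℤ) :
    (fun i => (x i : ℂ)) ⬝ᵥ (fun i => (y i : ℂ)) = ((x ⬝ᵥ y : ℤ) : ℂ) := by
  simp only [dotProduct]
  push_cast
  rfl

lemma cast_mulVec (A : Matrix (Fin n) (Fin n) ℤ) (y : Fin n → ℤ) :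
    (A.map (Int.cast : ℤ → ℂ)) *ᵥ (fun i => (y i : ℂ)) = fun i => ((A *ᵥ y) i : ℂ) := by
  ext i
  simp only [Matrix.mulVec, dotProduct, Matrix.map_apply]
  push_cast
  rfl

lemma star_cast (x : Fin n → ℤ) : star (fun i => (x i : ℂ)) = fun i => (x i : ℂ) := by
  ext i
  simp

/-- Key counting lemma: if the form has an orthogonal family `u` diagonalizing `M` with
values `lam`, and vanishes on a subspace `Lc`, then for any set `P` of indices with
positive `lam`, `card P + dim Lc ≤ n`. -/
lemma aux_card_le (M : Matrix (Fin n) (Fin n) ℂ) (u : Fin n → (Fin n → ℂ)) (lam : Fin n → ℝ)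
    (hBu : ∀ i j, star (u i) ⬝ᵥ (M *ᵥ u j) = if i = j then (lam j : ℂ) else 0)
    (hUU : ∀ i j, star (u i) ⬝ᵥ u j = if i = j then 1 else 0)
    (Lc : Submodule ℂ (Fin n → ℂ)) (hLc : ∀ x ∈ Lc, ∀ y ∈ Lc, star x ⬝ᵥ (M *ᵥ y) = 0)
    (P : Finset (Fin n)) (hP : ∀ i ∈ P, 0 < lam i) :
    P.card + Module.finrank ℂ Lc ≤ n := by
  classical
  set v : {i // i ∈ P} → (Fin n → ℂ) := fun p => u p with hv
  have hvind : LinearIndependent ℂ v := by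
    rw [Fintype.linearIndependent_iff]
    intro c hc p
    have h0 : star (u (p : Fin n)) ⬝ᵥ (∑ q, c q • v q) = c p := by
      rw [dot_sum_smul]
      have he : ∀ q : {i // i ∈ P},
          c q * (star (u (p : Fin n)) ⬝ᵥ v q) = if p = q then c q else 0 := by
        intro q
        rw [hv, hUU]
        by_cases h : p = q
        · simp [h]
        · have h' : (p : Fin n) ≠ (q : Fin n) := fun hh => h (Subtype.ext hh)
          simp [h, h']
      rw [Finset.sum_congr rfl fun q _ => he q, Finset.sum_ite_eq]
      simp
    rw [hc] at h0
    simpa using h0.symm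
  set W := Submodule.span ℂ (Set.range v) with hW
  have hWrank : Module.finrank ℂ W = P.card := by
    rw [hW, finrank_span_eq_card hvind, Fintype.card_coe]
  have hWL : W ⊓ Lc = ⊥ := by
    rw [Submodule.eq_bot_iff]
    intro x hx
    obtain ⟨hxW, hxL⟩ := Submodule.mem_inf.mp hx
    obtain ⟨c, hc⟩ := (Submodule.mem_span_range_iff_exists_fun ℂ).mp hxW
    have hB0 : star x ⬝ᵥ (M *ᵥ x) = 0 := hLc x hxL x hxL
    rw [← hc, B_sum_sum] at hB0
    have hcol : ∀ p : {i // i ∈ P},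
        (∑ q : {i // i ∈ P}, (starRingEnd ℂ) (c p) * c q * (star (v p) ⬝ᵥ (M *ᵥ v q)))
          = ((Complex.normSq (c p) * lam (p : Fin n) : ℝ) : ℂ) := by
      intro p
      have he : ∀ q : {i // i ∈ P},
          (starRingEnd ℂ) (c p) * c q * (star (v p) ⬝ᵥ (M *ᵥ v q)) =
            if p = q then (starRingEnd ℂ) (c p) * c q * ((lam (q : Fin n) : ℝ) : ℂ) else 0 := by
        intro q
        rw [hv, hBu]
        by_cases h : p = q
        · simp [h]
        · have h' : (p : Fin n) ≠ (q : Fin n) := fun hh => h (Subtype.ext hh)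
          simp [h, h']
      rw [Finset.sum_congr rfl fun q _ => he q, Finset.sum_ite_eq]
      simp only [Finset.mem_univ, if_true]
      rw [mul_comm ((starRingEnd ℂ) (c p)) (c p), Complex.mul_conj]
      push_cast
      ring
    rw [Finset.sum_congr rfl fun p _ => hcol p] at hB0
    have hB0' : ((∑ p : {i // i ∈ P}, Complex.normSq (c p) * lam (p : Fin n) : ℝ) : ℂ) = 0 := by
      push_cast
      convert hB0 using 2 with p
      push_cast
      ring
    rw [Complex.ofReal_eq_zero] at hB0'
    have hzero : ∀ p ∈ (Finset.univ : Finset {i // i ∈ P}),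
        Complex.normSq (c p) * lam (p : Fin n) = 0 := by
      rw [← Finset.sum_eq_zero_iff_of_nonneg]
      · exact hB0'
      · intro p _
        exact mul_nonneg (Complex.normSq_nonneg _) (le_of_lt (hP _ p.2))
    have hc0 : ∀ p : {i // i ∈ P}, c p = 0 := by
      intro p
      have := hzero p (Finset.mem_univ p)
      rcases mul_eq_zero.mp this with h | h
      · exact Complex.normSq_eq_zero.mp h
      · exact absurd h (ne_of_gt (hP _ p.2))
    rw [← hc]
    simp [hc0]
  have hsum := Submodule.finrank_sup_add_finrank_inf_eq W Lc
  rw [hWL] at hsum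
  simp only [finrank_bot, add_zero] at hsum
  calc P.card + Module.finrank ℂ Lc = Module.finrank ℂ W + Module.finrank ℂ Lc := by
        rw [hWrank]
    _ = Module.finrank ℂ (W ⊔ Lc : Submodule ℂ (Fin n → ℂ)) := hsum.symm
    _ ≤ Module.finrank ℂ (Fin n → ℂ) := Submodule.finrank_le _
    _ = n := by simp [Module.finrank_fintype_fun_eq_card]

end SigAux


open SigAux in
/-- For a metabolic Seifert matrix of size `2g` and a unit complex number
`ω ≠ 1` with `Δ_V(ω) ≠ 0`, the matrix `V_ω` is a nonsingular Hermitian matrix with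
exactly `g` positive and `g` negative eigenvalues (Levine–Tristram signature vanishes). -/
theorem stmt_3 {g : ℕ} (V : Matrix (Fin (2 * g)) (Fin (2 * g)) ℤ)
    (hV : SeifertMatrix V) (hM : Metabolic V)
    (ω : ℂ) (hω : ‖ω‖ = 1) (hω1 : ω ≠ 1)
    (hΔ : Polynomial.aeval ω (alexPoly V) ≠ 0) :
    ∃ hHerm : (omegaForm V ω).IsHermitian,
      (omegaForm V ω).det ≠ 0 ∧
      (Finset.univ.filter fun i => 0 < hHerm.eigenvalues i).card = g ∧
      (Finset.univ.filter fun i => hHerm.eigenvalues i < 0).card = g := by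
  classical
  obtain ⟨L, ⟨L', hcompl⟩, hrank, hiso⟩ := hM
  -- Hermitian
  have hH : (omegaForm V ω).IsHermitian := by
    show (omegaForm V ω)ᴴ = omegaForm V ω
    ext i j
    simp only [omegaForm, Matrix.conjTranspose_apply, Matrix.add_apply, Matrix.smul_apply,
      Matrix.map_apply, Matrix.transpose_apply, smul_eq_mul, map_add, _root_.map_mul, map_intCast,
      map_div₀, map_sub, _root_.map_one, map_ofNat, Complex.conj_conj, star_add, star_mul',
      star_div₀, star_sub, star_one, star_ofNat, star_intCast, RCLike.star_def]
    ring
  -- determinant nonzero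
  have hωc : (starRingEnd ℂ) ω * ω = 1 := by
    rw [mul_comm, Complex.mul_conj, Complex.normSq_eq_norm_sq, hω]; norm_num
  have h1ω : (1 : ℂ) - ω ≠ 0 := sub_ne_zero.mpr (Ne.symm hω1)
  have hdet1 : ((V.map (Int.cast : ℤ → ℂ)) - ω • (Vᵀ.map (Int.cast : ℤ → ℂ))).det ≠ 0 := by
    have heval : (Polynomial.aeval ω) (alexPoly V) =
        ((V.map (Int.cast : ℤ → ℂ)) - ω • (Vᵀ.map (Int.cast : ℤ → ℂ))).det := by
      rw [alexPoly, AlgHom.map_det]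
      congr 1
      ext i j
      simp [Matrix.map_apply, Matrix.sub_apply, Matrix.smul_apply, AlgHom.mapMatrix_apply,
        smul_eq_mul]
    rw [← heval]; exact hΔ
  have hdetM : (omegaForm V ω).det ≠ 0 := by
    have hfact : omegaForm V ω = ((1 - ω) / 2) •
        ((V.map (Int.cast : ℤ → ℂ)) - ((starRingEnd ℂ) ω) • (Vᵀ.map (Int.cast : ℤ → ℂ))) := by
      ext i j
      simp only [omegaForm, Matrix.add_apply, Matrix.smul_apply, Matrix.sub_apply,
        Matrix.map_apply, Matrix.transpose_apply, smul_eq_mul]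
      linear_combination (- ((V j i : ℂ)) / 2) * hωc
    rw [hfact, Matrix.det_smul]
    apply mul_ne_zero
    · exact pow_ne_zero _ (div_ne_zero h1ω two_ne_zero)
    · have hmap : (V.map (Int.cast : ℤ → ℂ)) - ((starRingEnd ℂ) ω) • (Vᵀ.map (Int.cast : ℤ → ℂ)) =
          ((V.map (Int.cast : ℤ → ℂ)) - ω • (Vᵀ.map (Int.cast : ℤ → ℂ))).map (starRingEnd ℂ) := by
        ext i j
        simp [Matrix.map_apply, Matrix.sub_apply, Matrix.smul_apply, map_sub, _root_.map_mul,
          map_intCast, smul_eq_mul]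
      rw [hmap, ← RingHom.mapMatrix_apply, ← RingHom.map_det]
      simpa using fun h => hdet1 ((starRingEnd ℂ).injective (by simpa using h))
  -- eigen data
  set lam : Fin (2 * g) → ℝ := hH.eigenvalues with hlamdef
  set u : Fin (2 * g) → (Fin (2 * g) → ℂ) := fun j i => hH.eigenvectorBasis j i with hudef
  have hBu : ∀ i j, star (u i) ⬝ᵥ ((omegaForm V ω) *ᵥ u j) =
      if i = j then (lam j : ℂ) else 0 := by
    intro i j
    have h := congrFun (congrFun (show (star (hH.eigenvectorUnitary : Matrix (Fin (2*g)) (Fin (2*g)) ℂ)) *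
        (omegaForm V ω) * (hH.eigenvectorUnitary : Matrix (Fin (2*g)) (Fin (2*g)) ℂ) =
        diagonal (RCLike.ofReal ∘ hH.eigenvalues) by
      rw [← Unitary.conjStarAlgAut_star_apply (S := ℂ)]
      exact hH.conjStarAlgAut_star_eigenvectorUnitary) i) j
    have hL : ((star (hH.eigenvectorUnitary : Matrix (Fin (2*g)) (Fin (2*g)) ℂ)) * (omegaForm V ω) *
        (hH.eigenvectorUnitary : Matrix (Fin (2*g)) (Fin (2*g)) ℂ)) i j =
        star (u i) ⬝ᵥ ((omegaForm V ω) *ᵥ u j) := by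
      simp only [Matrix.mul_apply, Matrix.mulVec, dotProduct, Matrix.star_apply, Pi.star_apply,
        Finset.sum_mul, Finset.mul_sum, hudef, Matrix.IsHermitian.eigenvectorUnitary_apply]
      rw [Finset.sum_comm]
      refine Finset.sum_congr rfl fun k _ => Finset.sum_congr rfl fun l _ => by ring
    rw [hL] at h
    rw [h, Matrix.diagonal_apply]
    by_cases hij : i = j
    · subst hij; simp [hlamdef]
    · simp [hij]
  have hUU : ∀ i j, star (u i) ⬝ᵥ (u j) = if i = j then 1 else 0 := by
    intro i j
    have horm := hH.eigenvectorBasis.orthonormal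
    rw [orthonormal_iff_ite] at horm
    have := horm i j
    rw [EuclideanSpace.inner_eq_star_dotProduct, dotProduct_comm] at this
    exact this
  -- all eigenvalues nonzero
  have hlam0 : ∀ i, lam i ≠ 0 := by
    intro i h0
    apply hdetM
    rw [hH.det_eq_prod_eigenvalues]
    refine Finset.prod_eq_zero (Finset.mem_univ i) ?_
    rw [← hlamdef, h0]
    simp
  -- the metaboliser over ℂ
  have hg2 : Module.finrank ℤ L = g := by omega
  let bL : Module.Basis (Fin g) ℤ L := Module.finBasisOfFinrankEq ℤ L hg2
  let uL : Fin g → (Fin (2 * g) → ℂ) := fun j => fun i => ((bL j : Fin (2 * g) → ℤ) i : ℂ)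
  set Lc : Submodule ℂ (Fin (2 * g) → ℂ) := Submodule.span ℂ (Set.range uL) with hLcdef
  have hLcB : ∀ x ∈ Lc, ∀ y ∈ Lc, star x ⬝ᵥ ((omegaForm V ω) *ᵥ y) = 0 := by
    apply B_vanish_span
    rintro x ⟨i, rfl⟩ y ⟨j, rfl⟩
    have h1 : (bL i : Fin (2 * g) → ℤ) ⬝ᵥ (V *ᵥ (bL j : Fin (2 * g) → ℤ)) = 0 :=
      hiso _ (bL i).2 _ (bL j).2
    have h2 : (bL i : Fin (2 * g) → ℤ) ⬝ᵥ (Vᵀ *ᵥ (bL j : Fin (2 * g) → ℤ)) = 0 := by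
      rw [Matrix.dotProduct_mulVec, Matrix.vecMul_transpose, dotProduct_comm]
      exact hiso _ (bL j).2 _ (bL i).2
    show star (uL i) ⬝ᵥ ((omegaForm V ω) *ᵥ uL j) = 0
    rw [show uL i = (fun k => ((bL i : Fin (2*g) → ℤ) k : ℂ)) from rfl,
      show uL j = (fun k => ((bL j : Fin (2*g) → ℤ) k : ℂ)) from rfl, star_cast]
    rw [omegaForm, Matrix.add_mulVec, Matrix.smul_mulVec, Matrix.smul_mulVec,
      dotProduct_add, dotProduct_smul, dotProduct_smul,
      cast_mulVec, cast_mulVec, cast_dotProduct, cast_dotProduct, h1, h2]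
    simp
  -- linear independence of uL over ℂ
  have hind : LinearIndependent ℂ uL := by
    set f : Fin g → ((Fin (2 * g) → ℤ) →ₗ[ℤ] ℤ) :=
      fun k => (bL.coord k).comp (Submodule.linearProjOfIsCompl L L' hcompl) with hf
    set w : Fin g → (Fin (2 * g) → ℤ) :=
      fun k => fun i => f k (fun j => if i = j then 1 else 0) with hw
    have hfx : ∀ k x, f k x = x ⬝ᵥ w k := by
      intro k x
      rw [LinearMap.pi_apply_eq_sum_univ (f k) x]
      simp [dotProduct, hw, smul_eq_mul]
    have hdual : ∀ k j, ((bL j : Fin (2 * g) → ℤ)) ⬝ᵥ w k = if j = k then 1 else 0 := by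
      intro k j
      rw [← hfx]
      show (bL.coord k) ((Submodule.projectionOnto L L' hcompl) (bL j : Fin (2 * g) → ℤ)) = _
      rw [Submodule.linearProjOfIsCompl_apply_left hcompl (bL j)]
      rw [Module.Basis.coord_apply, Module.Basis.repr_self]
      exact Finsupp.single_apply
    rw [Fintype.linearIndependent_iff]
    intro c hc k
    have hdot := congrArg (fun v => v ⬝ᵥ (fun i => ((w k i : ℤ) : ℂ))) hc
    rw [sum_smul_dot] at hdot
    have hterm : ∀ j, c j * ((uL j) ⬝ᵥ (fun i => ((w k i : ℤ) : ℂ))) =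
        if j = k then c j else 0 := by
      intro j
      rw [show uL j = (fun i => ((bL j : Fin (2*g) → ℤ) i : ℂ)) from rfl, cast_dotProduct, hdual]
      by_cases h : j = k <;> simp [h]
    rw [Finset.sum_congr rfl fun j _ => hterm j, Finset.sum_ite_eq' Finset.univ k c] at hdot
    simpa using hdot
  have hLcrank : Module.finrank ℂ Lc = g := by
    rw [hLcdef, finrank_span_eq_card hind, Fintype.card_fin]
  -- counting
  set P : Finset (Fin (2 * g)) := Finset.univ.filter (fun i => 0 < lam i) with hPdef
  set N : Finset (Fin (2 * g)) := Finset.univ.filter (fun i => lam i < 0) with hNdef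
  have hPle : P.card + g ≤ 2 * g := by
    have := aux_card_le (omegaForm V ω) u lam hBu hUU Lc hLcB P
      (fun i hi => (Finset.mem_filter.mp hi).2)
    rwa [hLcrank] at this
  have hNle : N.card + g ≤ 2 * g := by
    have hBu' : ∀ i j, star (u i) ⬝ᵥ ((-(omegaForm V ω)) *ᵥ u j) =
        if i = j then ((fun i => -lam i) j : ℂ) else 0 := by
      intro i j
      rw [Matrix.neg_mulVec, dotProduct_neg, hBu]
      by_cases h : i = j <;> simp [h]
    have hLcB' : ∀ x ∈ Lc, ∀ y ∈ Lc, star x ⬝ᵥ ((-(omegaForm V ω)) *ᵥ y) = 0 := by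
      intro x hx y hy
      rw [Matrix.neg_mulVec, dotProduct_neg, hLcB x hx y hy, neg_zero]
    have := aux_card_le (-(omegaForm V ω)) u (fun i => -lam i) hBu' hUU Lc hLcB' N
      (fun i hi => by
        have := (Finset.mem_filter.mp hi).2
        simpa using this)
    rwa [hLcrank] at this
  have hcard : P.card + N.card = 2 * g := by
    have hNalt : N = Finset.univ.filter (fun i => ¬ 0 < lam i) := by
      ext i
      simp only [hNdef, Finset.mem_filter, Finset.mem_univ, true_and, not_lt]
      constructor
      · exact fun h => le_of_lt h
      · exact fun h => lt_of_le_of_ne h (hlam0 i)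
    rw [hNalt, hPdef, Finset.card_filter_add_card_filter_not]
    simp
  refine ⟨hH, hdetM, ?_, ?_⟩
  · have hPP : (Finset.univ.filter fun i => 0 < hH.eigenvalues i) = P := by
      rw [hPdef]
    rw [hPP]; omega
  · have hNN : (Finset.univ.filter fun i => hH.eigenvalues i < 0) = N := by
      rw [hNdef]
    rw [hNN]; omega
end

section
/- Let V be a metabolic abstract Seifert matrix of size 2g, and let q : (ℤ/2)^(2g) → ℤ/2 be the quadratic form q(x) = xᵀ V x reduced mod 2. Then q takes the value 0 on more than half of the elements of (ℤ/2)^(2g); that is, the Arf invariant of a metabolic Seifert form vanishes. -/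
open Matrix Polynomial

/-! ### Auxiliary material for the proof -/

theorem zmod2_eq_zero_of_ne_one : ∀ {t : ZMod 2}, t ≠ 1 → t = 0 := by decide

theorem zmod2_add_one_iff : ∀ t : ZMod 2, (t + 1 = 0 ↔ ¬ t = 0) := by decide

/-- Polarization identity for the quadratic form of a matrix. -/
theorem quad_add {n : Type*} [Fintype n] {R : Type*} [CommRing R] (N : Matrix n n R)
    (z w : n → R) :
    (z + w) ⬝ᵥ N *ᵥ (z + w) = z ⬝ᵥ N *ᵥ z + w ⬝ᵥ N *ᵥ w + z ⬝ᵥ (N + Nᵀ) *ᵥ w := by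
  have h : w ⬝ᵥ N *ᵥ z = z ⬝ᵥ Nᵀ *ᵥ w := by
    rw [Matrix.mulVec_transpose, Matrix.dotProduct_mulVec w N z, dotProduct_comm]
  simp only [Matrix.mulVec_add, Matrix.add_mulVec, dotProduct_add, add_dotProduct]
  rw [h]
  ring

/-- Componentwise reduction mod 2, as a semilinear map. -/
def redmap (n : ℕ) : (Fin n → ℤ) →ₛₗ[Int.castRingHom (ZMod 2)] (Fin n → ZMod 2) where
  toFun x := fun i => ((x i : ℤ) : ZMod 2)
  map_add' x y := by funext i; push_cast [Pi.add_apply]; ring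
  map_smul' c x := by funext i; push_cast [Pi.smul_apply, smul_eq_mul]; simp [mul_comm]

instance : RingHomSurjective (Int.castRingHom (ZMod 2)) := ⟨ZMod.intCast_surjective⟩

theorem redmap_surjective (n : ℕ) : Function.Surjective (redmap n) := fun z =>
  ⟨fun i => (ZMod.cast (z i) : ℤ), funext fun i => ZMod.intCast_zmod_cast (z i)⟩

theorem redmap_dot {n : ℕ} (V : Matrix (Fin n) (Fin n) ℤ) (x y : Fin n → ℤ) :
    (redmap n) x ⬝ᵥ (V.map (Int.cast : ℤ → ZMod 2)).mulVec ((redmap n) y)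
      = ((x ⬝ᵥ V.mulVec y : ℤ) : ZMod 2) := by
  simp only [redmap, LinearMap.coe_mk, AddHom.coe_mk, dotProduct, Matrix.mulVec,
    Matrix.map_apply]
  push_cast
  rfl

/-- The main counting argument: a nondegenerate mod-2 quadratic form admitting a totally
isotropic subspace of dimension (at least) `g` takes the value `0` exactly
`2^(2g-1) + 2^(g-1)` times. -/
theorem arf_count {g : ℕ} (M2 : Matrix (Fin (2*g)) (Fin (2*g)) (ZMod 2))
    (hdet : (M2 + M2ᵀ).det ≠ 0)
    (Lb : Submodule (ZMod 2) (Fin (2*g) → ZMod 2))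
    (hqL : ∀ z ∈ Lb, z ⬝ᵥ M2 *ᵥ z = 0)
    (hge : g ≤ Module.finrank (ZMod 2) Lb) :
    2 * (Finset.univ.filter fun x : Fin (2*g) → ZMod 2 => x ⬝ᵥ M2 *ᵥ x = 0).card
      = 2^(2*g) + 2^g := by
  classical
  set A := M2 + M2ᵀ with hA
  set B := Matrix.toBilin' A with hB
  have hBapp : ∀ z w, B z w = z ⬝ᵥ A *ᵥ w := fun z w => Matrix.toBilin'_apply' A z w
  have hkey : ∀ z w : Fin (2*g) → ZMod 2,
      (z + w) ⬝ᵥ M2 *ᵥ (z + w) = z ⬝ᵥ M2 *ᵥ z + w ⬝ᵥ M2 *ᵥ w + B z w := by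
    intro z w; rw [hBapp]; exact quad_add M2 z w
  have hsymm : ∀ z w, B z w = B w z := by
    intro z w
    have h1 := hkey z w
    have h2 := hkey w z
    rw [add_comm w z] at h2
    linear_combination h1.symm.trans h2
  have hrefl : B.IsRefl := fun z w h => by rw [hsymm]; exact h
  have hnd : B.Nondegenerate :=
    LinearMap.BilinForm.nondegenerate_toBilin'_of_det_ne_zero' A hdet
  have hBL : ∀ z ∈ Lb, ∀ w ∈ Lb, B z w = 0 := by
    intro z hz w hw
    have h := hkey z w
    rw [hqL z hz, hqL w hw, hqL _ (Lb.add_mem hz hw)] at h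
    simpa using h.symm
  have hle : Lb ≤ B.orthogonal Lb := fun z hz w hw => hBL w hw z hz
  have hfin : Module.finrank (ZMod 2) (Fin (2*g) → ZMod 2) = 2*g :=
    Module.finrank_fin_fun _
  have horth := LinearMap.BilinForm.finrank_orthogonal hnd Lb
  rw [hfin] at horth
  have hle' : Module.finrank (ZMod 2) Lb ≤ 2*g - Module.finrank (ZMod 2) Lb := by
    rw [← horth]; exact Submodule.finrank_mono hle
  have hLbfin : Module.finrank (ZMod 2) Lb ≤ 2*g := by
    have h := Submodule.finrank_le Lb
    rw [hfin] at h; exact h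
  have hrk : Module.finrank (ZMod 2) Lb = g := by omega
  have hortheq : B.orthogonal Lb = Lb := by
    symm
    apply Submodule.eq_of_le_of_finrank_le hle
    rw [horth, hrk]
    omega
  obtain ⟨Mc, hMc⟩ := Submodule.exists_isCompl Lb
  have hrkMc : Module.finrank (ZMod 2) Mc = g := by
    have h := Submodule.finrank_add_eq_of_isCompl hMc
    rw [hrk, hfin] at h; omega
  have cardLb : Fintype.card Lb = 2^g := by
    rw [Module.card_eq_pow_finrank (K := ZMod 2) (V := Lb), ZMod.card, hrk]
  have cardMc : Fintype.card Mc = 2^g := by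
    rw [Module.card_eq_pow_finrank (K := ZMod 2) (V := Mc), ZMod.card, hrkMc]
  set e := Submodule.prodEquivOfIsCompl Mc Lb hMc.symm with he
  rw [Finset.card_filter]
  rw [← Fintype.sum_equiv e.toEquiv
    (fun p => if ((e.toEquiv p : Fin (2*g) → ZMod 2) ⬝ᵥ M2 *ᵥ (e.toEquiv p)) = 0 then 1 else 0)
    (fun x => if x ⬝ᵥ M2 *ᵥ x = 0 then 1 else 0) (fun p => rfl)]
  rw [Fintype.sum_prod_type]
  have inner : ∀ m : Mc, 2 * ∑ l : Lb,
      (if ((e.toEquiv (m, l) : Fin (2*g) → ZMod 2) ⬝ᵥ M2 *ᵥ (e.toEquiv (m, l))) = 0 then 1 else 0)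
      = 2^g + (if m = 0 then 2^g else 0) := by
    intro m
    have hq' : ∀ l : Lb, ((e.toEquiv (m, l) : Fin (2*g) → ZMod 2) ⬝ᵥ M2 *ᵥ (e.toEquiv (m, l)))
        = (m : Fin (2*g) → ZMod 2) ⬝ᵥ M2 *ᵥ (m : Fin (2*g) → ZMod 2)
          + B (m : Fin (2*g) → ZMod 2) (l : Fin (2*g) → ZMod 2) := by
      intro l
      have hco : (e.toEquiv (m, l) : Fin (2*g) → ZMod 2)
          = (m : Fin (2*g) → ZMod 2) + (l : Fin (2*g) → ZMod 2) := by
        rw [he]; rfl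
      rw [hco, hkey, hqL _ l.2, add_zero]
    simp only [hq']
    by_cases hm : m = 0
    · subst hm
      have hzero : ∀ l : Lb,
          ((0 : Mc) : Fin (2*g) → ZMod 2) ⬝ᵥ M2 *ᵥ ((0 : Mc) : Fin (2*g) → ZMod 2)
            + B ((0 : Mc) : Fin (2*g) → ZMod 2) (l : Fin (2*g) → ZMod 2) = 0 := by
        intro l
        rw [hBapp]
        simp
      rw [Finset.sum_congr rfl fun l _ => if_pos (hzero l), Finset.sum_const,
        Finset.card_univ, cardLb, if_pos rfl]
      simp [two_mul]
    · have hl₀ : ∃ l₀ : Lb, B (m : Fin (2*g) → ZMod 2) (l₀ : Fin (2*g) → ZMod 2) = 1 := by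
        by_contra hno
        push_neg at hno
        have hzero : ∀ l : Lb, B (m : Fin (2*g) → ZMod 2) (l : Fin (2*g) → ZMod 2) = 0 :=
          fun l => zmod2_eq_zero_of_ne_one (hno l)
        have hmem : (m : Fin (2*g) → ZMod 2) ∈ B.orthogonal Lb := by
          intro w hw
          show B w m = 0
          rw [hsymm]
          exact hzero ⟨w, hw⟩
        rw [hortheq] at hmem
        have hbot : (m : Fin (2*g) → ZMod 2) ∈ (⊥ : Submodule (ZMod 2) (Fin (2*g) → ZMod 2)) :=
          hMc.disjoint.le_bot ⟨hmem, m.2⟩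
        rw [Submodule.mem_bot] at hbot
        exact hm (Subtype.ext hbot)
      obtain ⟨l₀, hl₀⟩ := hl₀
      set c := (m : Fin (2*g) → ZMod 2) ⬝ᵥ M2 *ᵥ (m : Fin (2*g) → ZMod 2) with hc
      have hll : l₀ + l₀ = 0 := by
        rw [← two_smul (ZMod 2) l₀, show (2 : ZMod 2) = 0 by decide, zero_smul]
      set P : Lb → Prop := fun l => c + B (m : Fin (2*g) → ZMod 2) (l : Fin (2*g) → ZMod 2) = 0
        with hP
      have hswap : ∀ l : Lb, P (l + l₀) ↔ ¬ P l := by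
        intro l
        have hadd : B (m : Fin (2*g) → ZMod 2) (((l + l₀ : Lb)) : Fin (2*g) → ZMod 2)
            = B (m : Fin (2*g) → ZMod 2) (l : Fin (2*g) → ZMod 2) + 1 := by
          rw [Submodule.coe_add, map_add, hl₀]
        rw [hP]
        simp only [hadd, ← add_assoc]
        exact zmod2_add_one_iff _
      have hcards : (Finset.univ.filter P).card = (Finset.univ.filter fun l => ¬ P l).card := by
        apply Finset.card_bij' (fun l _ => l + l₀) (fun l _ => l + l₀)
        · intro a ha
          simp only [Finset.mem_filter, Finset.mem_univ, true_and] at ha ⊢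
          exact fun hcon => (hswap a).mp hcon ha
        · intro a ha
          simp only [Finset.mem_filter, Finset.mem_univ, true_and] at ha ⊢
          exact (hswap a).mpr ha
        · intro a _; rw [add_assoc, hll, add_zero]
        · intro a _; rw [add_assoc, hll, add_zero]
      have htot := Finset.card_filter_add_card_filter_not
        (s := (Finset.univ : Finset Lb)) (p := P)
      rw [Finset.card_univ, cardLb] at htot
      have hsum : ∑ l : Lb, (if P l then 1 else 0) = (Finset.univ.filter P).card :=
        (Finset.card_filter _ _).symm
      rw [show (fun l : Lb => c + B (m : Fin (2*g) → ZMod 2) (l : Fin (2*g) → ZMod 2) = 0) = P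
        from rfl] at *
      rw [hsum, if_neg hm, add_zero]
      omega
  calc 2 * ∑ m : Mc, ∑ l : Lb,
        (if ((e.toEquiv (m, l) : Fin (2*g) → ZMod 2) ⬝ᵥ M2 *ᵥ (e.toEquiv (m, l))) = 0
          then 1 else 0)
      = ∑ m : Mc, 2 * ∑ l : Lb,
        (if ((e.toEquiv (m, l) : Fin (2*g) → ZMod 2) ⬝ᵥ M2 *ᵥ (e.toEquiv (m, l))) = 0
          then 1 else 0) := by
        rw [Finset.mul_sum]
    _ = ∑ m : Mc, (2^g + (if m = 0 then 2^g else 0)) := Finset.sum_congr rfl fun m _ => inner m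
    _ = 2^(2*g) + 2^g := by
        rw [Finset.sum_add_distrib, Finset.sum_const, Finset.card_univ, cardMc,
          Finset.sum_ite_eq' Finset.univ (0 : Mc) (fun _ => 2^g)]
        simp [smul_eq_mul, ← pow_add, two_mul]

/-- the mod-2 quadratic form `q(x) = xᵀVx` of a metabolic Seifert matrix
takes the value `0` on more than half of `(ℤ/2)^{2g}`: the Arf invariant vanishes. -/
theorem stmt_6 {g : ℕ} (V : Matrix (Fin (2 * g)) (Fin (2 * g)) ℤ)
    (hV : SeifertMatrix V) (hM : Metabolic V) :
    2 * (Finset.univ.filter fun x : Fin (2 * g) → ZMod 2 =>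
        x ⬝ᵥ (V.map (Int.cast : ℤ → ZMod 2)).mulVec x = 0).card
      > Fintype.card (Fin (2 * g) → ZMod 2) := by
  classical
  obtain ⟨L, ⟨L', hcompl⟩, hrank, hvan⟩ := hM
  set M2 : Matrix (Fin (2*g)) (Fin (2*g)) (ZMod 2) := V.map (Int.cast : ℤ → ZMod 2) with hM2
  have hdet : (M2 + M2ᵀ).det ≠ 0 := by
    have h1 : M2 + M2ᵀ = (V - Vᵀ).map (Int.cast : ℤ → ZMod 2) := by
      ext i j
      simp only [hM2, Matrix.add_apply, Matrix.map_apply, Matrix.transpose_apply,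
        Matrix.sub_apply]
      push_cast
      rw [sub_eq_add_neg, CharTwo.neg_eq]
    have hcoe : ((Int.castRingHom (ZMod 2) : ℤ →+* ZMod 2) : ℤ → ZMod 2)
        = (Int.cast : ℤ → ZMod 2) := rfl
    rw [h1, ← hcoe, ← RingHom.mapMatrix_apply, ← RingHom.map_det]
    rcases hV with h | h <;> rw [h] <;> decide
  set Lb : Submodule (ZMod 2) (Fin (2*g) → ZMod 2) := L.map (redmap (2*g)) with hLb
  have hqL : ∀ z ∈ Lb, z ⬝ᵥ M2 *ᵥ z = 0 := by
    rintro z ⟨x, hx, rfl⟩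
    rw [hM2, redmap_dot V x x, hvan x hx x hx, Int.cast_zero]
  have hrkL : Module.finrank ℤ L = g := by omega
  obtain ⟨nL, bL⟩ := Submodule.basisOfPid (Pi.basisFun ℤ (Fin (2*g))) L
  obtain ⟨nL', bL'⟩ := Submodule.basisOfPid (Pi.basisFun ℤ (Fin (2*g))) L'
  haveI := Module.Free.of_basis bL
  haveI := Module.Free.of_basis bL'
  haveI : Module.Finite ℤ L := Module.Finite.of_basis bL
  haveI : Module.Finite ℤ L' := Module.Finite.of_basis bL'
  have hprod : Module.finrank ℤ L + Module.finrank ℤ L' = 2*g := by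
    have h1 := (Submodule.prodEquivOfIsCompl L L' hcompl).finrank_eq
    rw [Module.finrank_prod] at h1
    rw [h1, Module.finrank_fin_fun]
  have hnL' : nL' = g := by
    have h := Module.finrank_eq_card_basis bL'
    rw [Fintype.card_fin] at h
    omega
  have hL'span : L' = Submodule.span ℤ (Set.range fun i : Fin nL' => (bL' i : Fin (2*g) → ℤ)) := by
    conv_lhs => rw [← Submodule.map_subtype_top L']
    rw [← bL'.span_eq, Submodule.map_span]
    congr 1
    rw [← Set.range_comp]
    rfl
  have himg : Submodule.map (redmap (2*g)) L'
      = Submodule.span (ZMod 2)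
        (Set.range fun i : Fin nL' => (redmap (2*g)) (bL' i : Fin (2*g) → ℤ)) := by
    conv_lhs => rw [hL'span]
    rw [Submodule.map_span]
    congr 1
    rw [← Set.range_comp]
    rfl
  have hub : Module.finrank (ZMod 2) (Submodule.map (redmap (2*g)) L') ≤ g := by
    rw [himg]
    have h3 := finrank_range_le_card (R := ZMod 2)
      (fun i : Fin nL' => (redmap (2*g)) (bL' i : Fin (2*g) → ℤ))
    rw [Set.finrank, Fintype.card_fin] at h3
    omega
  have hsup : Lb ⊔ Submodule.map (redmap (2*g)) L' = ⊤ := by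
    rw [hLb, ← Submodule.map_sup, hcompl.sup_eq_top, Submodule.map_top,
      LinearMap.range_eq_top]
    exact redmap_surjective _
  have hge : g ≤ Module.finrank (ZMod 2) Lb := by
    have h1 := Submodule.finrank_sup_add_finrank_inf_eq Lb (Submodule.map (redmap (2*g)) L')
    rw [hsup] at h1
    have h2 : Module.finrank (ZMod 2) (⊤ : Submodule (ZMod 2) (Fin (2*g) → ZMod 2)) = 2*g := by
      rw [finrank_top, Module.finrank_fin_fun]
    omega
  have hcount := arf_count M2 hdet Lb hqL hge
  rw [hcount]
  have hcard : Fintype.card (Fin (2 * g) → ZMod 2) = 2^(2*g) := by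
    rw [Fintype.card_fun, ZMod.card, Fintype.card_fin]
  rw [hcard]
  have hpos : 0 < 2^g := Nat.pow_pos (n := g) (by norm_num)
  omega
end

section
/- (Levine.) Let V be an abstract Seifert matrix whose Alexander polynomial Δ_V(t) = det(V − t·Vᵀ) is a quadratic polynomial that is irreducible over ℚ. Then there exists n ≥ 1 such that the block-diagonal direct sum of n copies of V is metabolic (i.e. V has finite order in the algebraic concordance group) if and only if Δ_V(1)·Δ_V(−1) < 0. -/
open Matrix Polynomial

lemma alexPoly_eq {m : ℕ} (V : Matrix (Fin m) (Fin m) ℤ) :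
    alexPoly V = det ((X : ℤ[X]) • (-Vᵀ).map C + V.map C) := by
  unfold alexPoly
  congr 1
  ext i j
  simp [sub_eq_add_neg]
  ring

lemma alexPoly_coeff_top {m : ℕ} (V : Matrix (Fin m) (Fin m) ℤ) :
    (alexPoly V).coeff m = (-1) ^ m * det V := by
  rw [alexPoly_eq]
  have h := Polynomial.coeff_det_X_add_C_card (-Vᵀ) V
  simp only [Fintype.card_fin] at h
  rw [h, det_neg, det_transpose]
  simp

lemma alexPoly_coeff_zero {m : ℕ} (V : Matrix (Fin m) (Fin m) ℤ) :
    (alexPoly V).coeff 0 = det V := by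
  rw [alexPoly_eq]
  exact Polynomial.coeff_det_X_add_C_zero (-Vᵀ) V

lemma alexPoly_eval_one {m : ℕ} (V : Matrix (Fin m) (Fin m) ℤ) :
    (alexPoly V).eval 1 = det (V - Vᵀ) := by
  unfold alexPoly
  rw [← coe_evalRingHom, RingHom.map_det]
  congr 1
  ext i j
  simp

lemma alexPoly_eval_negone {m : ℕ} (V : Matrix (Fin m) (Fin m) ℤ) :
    (alexPoly V).eval (-1) = det (V + Vᵀ) := by
  unfold alexPoly
  rw [← coe_evalRingHom, RingHom.map_det]
  congr 1
  ext i j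
  simp

lemma nsum_bilin {a n : ℕ} (V : Matrix (Fin a) (Fin a) ℤ) (x y : Fin (a*n) → ℤ) :
    x ⬝ᵥ (nsum V n).mulVec y =
      ∑ j : Fin n, (fun i => x (finProdFinEquiv (i,j))) ⬝ᵥ
        V.mulVec (fun i => y (finProdFinEquiv (i,j))) := by
  unfold nsum
  simp only [dotProduct, mulVec, dotProduct]
  rw [← Equiv.sum_comp finProdFinEquiv]
  simp only [reindex_apply, submatrix_apply, Equiv.symm_apply_apply]
  rw [Fintype.sum_prod_type, Finset.sum_comm]
  refine Finset.sum_congr rfl fun j _ => Finset.sum_congr rfl fun i _ => ?_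
  rw [← Equiv.sum_comp finProdFinEquiv, Fintype.sum_prod_type]
  simp only [Equiv.symm_apply_apply, blockDiagonal_apply]
  rw [Finset.sum_comm, Finset.sum_eq_single j]
  · simp
  · intro b _ hb; simp [Ne.symm hb]
  · simp

lemma dot2 (V : Matrix (Fin 2) (Fin 2) ℤ) (u v : Fin 2 → ℤ) :
    u ⬝ᵥ V.mulVec v = V 0 0 * (u 0 * v 0) + V 0 1 * (u 0 * v 1)
      + V 1 0 * (u 1 * v 0) + V 1 1 * (u 1 * v 1) := by
  simp [dotProduct, mulVec, Fin.sum_univ_two]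
  ring

lemma not_metabolic (V : Matrix (Fin 2) (Fin 2) ℤ)
    (hpos : 0 < 4 * (V 0 0 * V 1 1) - (V 0 1 + V 1 0)^2)
    (n : ℕ) (hn : 1 ≤ n) (hm : Metabolic (nsum V n)) : False := by
  set a := V 0 0 with ha'
  set b := V 0 1
  set c := V 1 0
  set d := V 1 1
  have ha : a ≠ 0 := by intro h; rw [h] at hpos; nlinarith [sq_nonneg (b + c)]
  obtain ⟨L, _, hrank, hiso⟩ := hm
  have hLne : L ≠ ⊥ := by
    intro h
    rw [h, finrank_bot] at hrank
    omega
  obtain ⟨x, hxL, hx0⟩ := Submodule.exists_mem_ne_zero_of_ne_bot hLne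
  have h0 := hiso x hxL x hxL
  rw [nsum_bilin] at h0
  -- multiply by 4a
  have h4 : ∑ j : Fin n, (4 * a) * ((fun i => x (finProdFinEquiv (i,j))) ⬝ᵥ
      V.mulVec (fun i => x (finProdFinEquiv (i,j)))) = 0 := by
    rw [← Finset.mul_sum, h0, mul_zero]
  have hterm : ∀ j : Fin n, (4 * a) * ((fun i => x (finProdFinEquiv (i,j))) ⬝ᵥ
      V.mulVec (fun i => x (finProdFinEquiv (i,j)))) =
      (2 * a * x (finProdFinEquiv ((0:Fin 2),j)) + (b + c) * x (finProdFinEquiv ((1:Fin 2),j)))^2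
      + (4 * (a*d) - (b+c)^2) * (x (finProdFinEquiv ((1:Fin 2),j)))^2 := by
    intro j
    rw [dot2]
    ring
  have hzero : ∀ j : Fin n, ∀ i : Fin 2, x (finProdFinEquiv (i, j)) = 0 := by
    have hnn : ∀ j ∈ Finset.univ, (0:ℤ) ≤ (4 * a) * ((fun i => x (finProdFinEquiv (i,j))) ⬝ᵥ
        V.mulVec (fun i => x (finProdFinEquiv (i,j)))) := by
      intro j _
      rw [hterm j]
      nlinarith [sq_nonneg (2 * a * x (finProdFinEquiv ((0:Fin 2),j)) + (b + c) * x (finProdFinEquiv ((1:Fin 2),j))), sq_nonneg (x (finProdFinEquiv ((1:Fin 2),j)))]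
    have heach := (Finset.sum_eq_zero_iff_of_nonneg hnn).1 h4
    intro j i
    have hj := heach j (Finset.mem_univ j)
    rw [hterm j] at hj
    set u := x (finProdFinEquiv ((0:Fin 2),j)) with hu'
    set v := x (finProdFinEquiv ((1:Fin 2),j)) with hv'
    have hv2 : v^2 = 0 := by
      have hle : v^2 ≤ 0 := by nlinarith [sq_nonneg (2 * a * u + (b + c) * v)]
      exact le_antisymm hle (sq_nonneg v)
    have h1 : v = 0 := by
      exact pow_eq_zero_iff two_ne_zero |>.1 hv2
    have h2 : u = 0 := by
      rw [h1] at hj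
      have h2a : (2 * a * u)^2 = 0 := by linarith [sq_nonneg (2 * a * u)]
      have := pow_eq_zero_iff (n := 2) two_ne_zero |>.1 h2a
      rcases mul_eq_zero.1 this with h | h
      · rcases mul_eq_zero.1 h with h' | h'
        · norm_num at h'
        · exact absurd h' ha
      · exact h
    fin_cases i <;> assumption
  apply hx0
  funext p
  have h := hzero (finProdFinEquiv.symm p).2 (finProdFinEquiv.symm p).1
  rwa [Prod.mk.eta, Equiv.apply_symm_apply] at h

def C4 (p q r s : ℤ) : Fin 4 → Fin 4 → ℤ :=
  ![![p,-q,-r,-s],![q,p,-s,r],![r,s,p,-q],![s,-r,q,p]]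

def Th (a b c d : ℤ) : Fin 2 → Fin 2 → ℤ :=
  ![![-(b+c), -(2*d)],![2*a, b+c]]

def lo (j : Fin 4) : Fin 8 := Fin.castAdd 4 j
def hi (t : Fin 4) : Fin 8 := Fin.natAdd 4 t


lemma lemC (p q r s k : ℤ) (hk : p^2+q^2+r^2+s^2 = k) (F G : Fin 4 → ℤ) :
    ∑ t : Fin 4, (∑ j : Fin 4, C4 p q r s t j * F j) * (∑ j : Fin 4, C4 p q r s t j * G j)
      = k * ∑ j : Fin 4, F j * G j := by
  simp only [Fin.sum_univ_four, C4]
  simp only [Matrix.cons_val_zero, Matrix.cons_val_one, Matrix.head_cons,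
    Matrix.cons_val_two, Matrix.tail_cons, Matrix.cons_val_three]
  linear_combination (F 0 * G 0 + F 1 * G 1 + F 2 * G 2 + F 3 * G 3) * hk

lemma lemTheta (a b c d k u1 u2 w1 w2 : ℤ) (hbc : b - c = 1 ∨ b - c = -1)
    (hkd : k = 1 - 4*(a*d - b*c)) :
    a * ((-(b+c)*u1 + -(2*d)*u2) * (-(b+c)*w1 + -(2*d)*w2))
  + b * ((-(b+c)*u1 + -(2*d)*u2) * (2*a*w1 + (b+c)*w2))
  + c * ((2*a*u1 + (b+c)*u2) * (-(b+c)*w1 + -(2*d)*w2))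
  + d * ((2*a*u1 + (b+c)*u2) * (2*a*w1 + (b+c)*w2))
  = -k * (a*(u1*w1) + b*(u1*w2) + c*(u2*w1) + d*(u2*w2)) := by
  subst hkd
  rcases hbc with h | h
  · have hc : c = b - 1 := by omega
    subst hc; ring
  · have hc : c = b + 1 := by omega
    subst hc; ring

lemma master (a b c d p q r s k : ℤ) (X0 X1 Y0 Y1 Z0 Z1 W0 W1 : Fin 4 → ℤ)
    (hk : p^2+q^2+r^2+s^2 = k) (hbc : b - c = 1 ∨ b - c = -1)
    (hkd : k = 1 - 4*(a*d - b*c))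
    (hZ0 : ∀ t, k * Z0 t = ∑ j : Fin 4, C4 p q r s t j * (-(b+c) * X0 j + -(2*d) * X1 j))
    (hZ1 : ∀ t, k * Z1 t = ∑ j : Fin 4, C4 p q r s t j * (2*a * X0 j + (b+c) * X1 j))
    (hW0 : ∀ t, k * W0 t = ∑ j : Fin 4, C4 p q r s t j * (-(b+c) * Y0 j + -(2*d) * Y1 j))
    (hW1 : ∀ t, k * W1 t = ∑ j : Fin 4, C4 p q r s t j * (2*a * Y0 j + (b+c) * Y1 j)) :
    ((∑ j : Fin 4, (a*(X0 j*Y0 j) + b*(X0 j*Y1 j) + c*(X1 j*Y0 j) + d*(X1 j*Y1 j)))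
      + (∑ t : Fin 4, (a*(Z0 t*W0 t) + b*(Z0 t*W1 t) + c*(Z1 t*W0 t) + d*(Z1 t*W1 t)))) = 0 := by
  have hk0 : k ≠ 0 := by omega
  set A0 : Fin 4 → ℤ := fun j => -(b+c) * X0 j + -(2*d) * X1 j with hA0
  set A1 : Fin 4 → ℤ := fun j => 2*a * X0 j + (b+c) * X1 j with hA1
  set B0 : Fin 4 → ℤ := fun j => -(b+c) * Y0 j + -(2*d) * Y1 j with hB0
  set B1 : Fin 4 → ℤ := fun j => 2*a * Y0 j + (b+c) * Y1 j with hB1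
  -- step 1: hi part scaled by k^2 equals sum over t of Q(Sx,Sy)
  have step1 : ∀ t : Fin 4,
      k^2 * (a*(Z0 t*W0 t) + b*(Z0 t*W1 t) + c*(Z1 t*W0 t) + d*(Z1 t*W1 t))
      = a*((∑ j : Fin 4, C4 p q r s t j * A0 j) * (∑ j : Fin 4, C4 p q r s t j * B0 j))
      + b*((∑ j : Fin 4, C4 p q r s t j * A0 j) * (∑ j : Fin 4, C4 p q r s t j * B1 j))
      + c*((∑ j : Fin 4, C4 p q r s t j * A1 j) * (∑ j : Fin 4, C4 p q r s t j * B0 j))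
      + d*((∑ j : Fin 4, C4 p q r s t j * A1 j) * (∑ j : Fin 4, C4 p q r s t j * B1 j)) := by
    intro t
    rw [← hZ0 t, ← hZ1 t, ← hW0 t, ← hW1 t]
    ring
  -- step 2: sum over t of Q(Sx,Sy) = k * ∑ j Q(A j, B j)
  have step2 :
      (∑ t : Fin 4, (a*((∑ j : Fin 4, C4 p q r s t j * A0 j) * (∑ j : Fin 4, C4 p q r s t j * B0 j))
      + b*((∑ j : Fin 4, C4 p q r s t j * A0 j) * (∑ j : Fin 4, C4 p q r s t j * B1 j))
      + c*((∑ j : Fin 4, C4 p q r s t j * A1 j) * (∑ j : Fin 4, C4 p q r s t j * B0 j))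
      + d*((∑ j : Fin 4, C4 p q r s t j * A1 j) * (∑ j : Fin 4, C4 p q r s t j * B1 j))))
      = k * ∑ j : Fin 4, (a*(A0 j * B0 j) + b*(A0 j * B1 j) + c*(A1 j * B0 j) + d*(A1 j * B1 j)) := by
    simp only [Finset.sum_add_distrib, ← Finset.mul_sum]
    rw [lemC p q r s k hk A0 B0, lemC p q r s k hk A0 B1,
        lemC p q r s k hk A1 B0, lemC p q r s k hk A1 B1]
    simp only [Finset.mul_sum, ← Finset.sum_add_distrib]
    exact Finset.sum_congr rfl fun j _ => by ring
  -- step 3: Q(A j, B j) = -k Q(X j, Y j)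
  have step3 : ∀ j : Fin 4,
      (a*(A0 j * B0 j) + b*(A0 j * B1 j) + c*(A1 j * B0 j) + d*(A1 j * B1 j))
      = -k * (a*(X0 j*Y0 j) + b*(X0 j*Y1 j) + c*(X1 j*Y0 j) + d*(X1 j*Y1 j)) := by
    intro j
    exact lemTheta a b c d k (X0 j) (X1 j) (Y0 j) (Y1 j) hbc hkd
  have key : k^2 * ((∑ j : Fin 4, (a*(X0 j*Y0 j) + b*(X0 j*Y1 j) + c*(X1 j*Y0 j) + d*(X1 j*Y1 j)))
      + (∑ t : Fin 4, (a*(Z0 t*W0 t) + b*(Z0 t*W1 t) + c*(Z1 t*W0 t) + d*(Z1 t*W1 t)))) = 0 := by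
    have e1 : k^2 * (∑ t : Fin 4, (a*(Z0 t*W0 t) + b*(Z0 t*W1 t) + c*(Z1 t*W0 t) + d*(Z1 t*W1 t)))
        = k * ∑ j : Fin 4, -k * (a*(X0 j*Y0 j) + b*(X0 j*Y1 j) + c*(X1 j*Y0 j) + d*(X1 j*Y1 j)) := by
      rw [Finset.mul_sum, Finset.sum_congr rfl (fun t _ => step1 t), step2,
        Finset.sum_congr rfl (fun j _ => step3 j)]
    rw [mul_add, e1]
    simp only [neg_mul, Finset.sum_neg_distrib, ← Finset.mul_sum]
    ring
  have := mul_eq_zero.1 key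
  rcases this with h | h
  · exact absurd (pow_eq_zero_iff two_ne_zero |>.1 h) hk0
  · exact h

lemma exists_compl_ker {m : ℕ} {ι : Type*} [Fintype ι] [DecidableEq ι]
    (φ : (Fin m → ℤ) →ₗ[ℤ] (ι → ℤ)) :
    ∃ L', IsCompl (LinearMap.ker φ) L' := by
  set L := LinearMap.ker φ with hL
  obtain ⟨nn, ⟨bR⟩⟩ := Submodule.nonempty_basis_of_pid (Pi.basisFun ℤ ι) (LinearMap.range φ)
  haveI : Module.Free ℤ ((Fin m → ℤ) ⧸ L) :=
    Module.Free.of_basis (bR.map (LinearMap.quotKerEquivRange φ).symm)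
  obtain ⟨sec, hsec⟩ := Module.projective_lifting_property L.mkQ LinearMap.id
    (Submodule.mkQ_surjective L)
  have hsec' : ∀ z, L.mkQ (sec z) = z := fun z => by
    have := LinearMap.ext_iff.1 hsec z
    simpa using this
  refine ⟨LinearMap.range sec, ?_, ?_⟩
  · rw [Submodule.disjoint_def]
    rintro x hxL ⟨y, rfl⟩
    have h1 : L.mkQ (sec y) = 0 := (Submodule.Quotient.mk_eq_zero L).2 hxL
    rw [hsec' y] at h1
    rw [h1, map_zero]
  · rw [codisjoint_iff, eq_top_iff]
    intro x _
    refine Submodule.mem_sup.2 ⟨x - sec (L.mkQ x), ?_, sec (L.mkQ x), ⟨L.mkQ x, rfl⟩, by abel⟩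
    have h3 : L.mkQ (x - sec (L.mkQ x)) = 0 := by
      rw [map_sub, hsec' (L.mkQ x), sub_self]
    rw [Submodule.mkQ_apply, Submodule.Quotient.mk_eq_zero] at h3
    exact h3

noncomputable def phi (a b c d p q r s : ℤ) (k : ℤ) :
    (Fin (2*8) → ℤ) →ₗ[ℤ] (Fin 2 × Fin 4 → ℤ) where
  toFun x := fun it => k * x (finProdFinEquiv (it.1, hi it.2)) -
    ∑ j : Fin 4, ∑ i' : Fin 2, C4 p q r s it.2 j * Th a b c d it.1 i' *
      x (finProdFinEquiv (i', lo j))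
  map_add' x y := by
    funext it
    simp only [Pi.add_apply, mul_add, Finset.sum_add_distrib]
    ring
  map_smul' m x := by
    funext it
    simp only [Pi.smul_apply, smul_eq_mul, RingHom.id_apply, Finset.mul_sum, mul_sub]
    congr 1
    · ring
    · refine Finset.sum_congr rfl fun j _ => ?_
      refine Finset.sum_congr rfl fun i' _ => ?_
      ring

lemma lo_or_hi (j : Fin 8) : (∃ j', j = lo j') ∨ (∃ t, j = hi t) := by
  rcases lt_or_ge j.1 4 with h | h
  · exact Or.inl ⟨⟨j.1, h⟩, Fin.ext rfl⟩
  · refine Or.inr ⟨⟨j.1 - 4, by omega⟩, Fin.ext ?_⟩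
    simp only [hi, Fin.natAdd]
    omega

lemma fin8_sum_split {M : Type*} [AddCommMonoid M] (f : Fin 8 → M) :
    ∑ j : Fin 8, f j = ∑ j : Fin 4, f (lo j) + ∑ t : Fin 4, f (hi t) :=
  Fin.sum_univ_add (f := fun j : Fin (4+4) => f j)

lemma metabolic_of (V : Matrix (Fin 2) (Fin 2) ℤ) (p q r s : ℤ)
    (hk : p^2+q^2+r^2+s^2 = 1 - 4*(V 0 0 * V 1 1 - V 0 1 * V 1 0))
    (hbc : V 0 1 - V 1 0 = 1 ∨ V 0 1 - V 1 0 = -1) :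
    Metabolic (nsum V 8) := by
  set a := V 0 0 with ha'
  set b := V 0 1 with hb'
  set c := V 1 0 with hc'
  set d := V 1 1 with hd'
  set k : ℤ := 1 - 4*(a*d - b*c) with hkdef
  set φ := phi a b c d p q r s k with hφ
  set L := LinearMap.ker φ with hL
  have hmem : ∀ x : Fin (2*8) → ℤ, x ∈ L ↔
      ((∀ t : Fin 4, k * x (finProdFinEquiv ((0:Fin 2), hi t)) =
        ∑ j : Fin 4, C4 p q r s t j * (-(b+c) * x (finProdFinEquiv ((0:Fin 2), lo j))
          + -(2*d) * x (finProdFinEquiv ((1:Fin 2), lo j)))) ∧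
       (∀ t : Fin 4, k * x (finProdFinEquiv ((1:Fin 2), hi t)) =
        ∑ j : Fin 4, C4 p q r s t j * (2*a * x (finProdFinEquiv ((0:Fin 2), lo j))
          + (b+c) * x (finProdFinEquiv ((1:Fin 2), lo j))))) := by
    intro x
    rw [hL, LinearMap.mem_ker, hφ]
    constructor
    · intro h
      have h' : ∀ it : Fin 2 × Fin 4, k * x (finProdFinEquiv (it.1, hi it.2)) =
          ∑ j : Fin 4, ∑ i' : Fin 2, C4 p q r s it.2 j * Th a b c d it.1 i' *
            x (finProdFinEquiv (i', lo j)) := by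
        intro it
        have := congrFun h it
        simp only [phi, LinearMap.coe_mk, AddHom.coe_mk, Pi.zero_apply] at this
        linarith [this]
      constructor
      · intro t
        have := h' ((0:Fin 2), t)
        simpa [Th, Fin.sum_univ_two, mul_add, mul_comm, mul_assoc, mul_left_comm] using this
      · intro t
        have := h' ((1:Fin 2), t)
        simpa [Th, Fin.sum_univ_two, mul_add, mul_comm, mul_assoc, mul_left_comm] using this
    · rintro ⟨h0, h1⟩
      funext it
      simp only [phi, LinearMap.coe_mk, AddHom.coe_mk, Pi.zero_apply]
      rw [sub_eq_zero]
      obtain ⟨i, t⟩ := it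
      fin_cases i <;> simp only [Fin.mk_zero, Fin.mk_one]
      · have := h0 t
        simp only [Fin.sum_univ_two, Th] at *
        rw [this]
        refine Finset.sum_congr rfl fun j _ => ?_
        simp [Th]
        ring
      · have := h1 t
        simp only [Fin.sum_univ_two, Th] at *
        rw [this]
        refine Finset.sum_congr rfl fun j _ => ?_
        simp [Th]
        ring
  have hk0 : k ≠ 0 := by omega
  -- the two bullet goals
  refine ⟨L, exists_compl_ker φ, ?_, ?_⟩
  · -- rank
    have hle : Module.finrank ℤ L ≤ 8 := by
      set π : (Fin (2*8) → ℤ) →ₗ[ℤ] (Fin 2 × Fin 4 → ℤ) :=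
        LinearMap.funLeft ℤ ℤ (fun ij => finProdFinEquiv (ij.1, lo ij.2)) with hπ
      have hinj : Function.Injective (π.comp L.subtype) := by
        rw [← LinearMap.ker_eq_bot]
        rw [Submodule.eq_bot_iff]
        rintro ⟨x, hxL⟩ hx
        have hx' : ∀ (i : Fin 2) (j : Fin 4), x (finProdFinEquiv (i, lo j)) = 0 := by
          intro i j
          have := congrFun (LinearMap.mem_ker.1 hx) (i, j)
          simpa [hπ, LinearMap.funLeft] using this
        have hhi : ∀ (i : Fin 2) (t : Fin 4), x (finProdFinEquiv (i, hi t)) = 0 := by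
          obtain ⟨h0, h1⟩ := (hmem x).1 hxL
          intro i t
          fin_cases i
          · have := h0 t
            simp only [hx', mul_zero, neg_mul, zero_mul, neg_zero, add_zero, mul_zero,
              Finset.sum_const_zero] at this
            rcases mul_eq_zero.1 this.symm.symm with h | h
            · exact absurd h hk0
            · simpa using h
          · have := h1 t
            simp only [hx', mul_zero, zero_mul, add_zero, Finset.sum_const_zero] at this
            rcases mul_eq_zero.1 this with h | h
            · exact absurd h hk0
            · simpa using h
        refine Subtype.ext ?_
        funext pp
        have hpp : pp = finProdFinEquiv (finProdFinEquiv.symm pp) := (Equiv.apply_symm_apply _ _).symm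
        rcases lo_or_hi (finProdFinEquiv.symm pp).2 with ⟨j', hj⟩ | ⟨t, ht⟩
        · rw [hpp]
          conv_lhs => rw [show (finProdFinEquiv.symm pp) = ((finProdFinEquiv.symm pp).1, lo j') by
            rw [← hj]]
          exact hx' _ _
        · rw [hpp]
          conv_lhs => rw [show (finProdFinEquiv.symm pp) = ((finProdFinEquiv.symm pp).1, hi t) by
            rw [← ht]]
          exact hhi _ _
      calc Module.finrank ℤ L ≤ Module.finrank ℤ (Fin 2 × Fin 4 → ℤ) :=
            LinearMap.finrank_le_finrank_of_injective hinj
        _ = 8 := by simp [Module.finrank_pi]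
    have hge : 8 ≤ Module.finrank ℤ L := by
      -- explicit elements of L
      set bv : Fin 2 → Fin 4 → (Fin (2*8) → ℤ) := fun i j pp =>
        Fin.addCases (fun j' : Fin 4 => if (finProdFinEquiv.symm pp).1 = i ∧ j' = j then k else 0)
          (fun t : Fin 4 => C4 p q r s t j * Th a b c d (finProdFinEquiv.symm pp).1 i)
          (finProdFinEquiv.symm pp).2 with hbv
      have ebv_lo : ∀ (i : Fin 2) (j : Fin 4) (i' : Fin 2) (j' : Fin 4),
          bv i j (finProdFinEquiv (i', lo j')) = if i' = i ∧ j' = j then k else 0 := by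
        intro i j i' j'
        simp only [hbv, Equiv.symm_apply_apply, lo]
        rw [Fin.addCases_left]
      have ebv_hi : ∀ (i : Fin 2) (j : Fin 4) (i' : Fin 2) (t : Fin 4),
          bv i j (finProdFinEquiv (i', hi t)) = C4 p q r s t j * Th a b c d i' i := by
        intro i j i' t
        simp only [hbv, Equiv.symm_apply_apply, hi]
        rw [Fin.addCases_right]
      have hbvmem : ∀ (i : Fin 2) (j : Fin 4), bv i j ∈ L := by
        intro i j
        refine (hmem (bv i j)).2 ⟨?_, ?_⟩
        · intro t
          rw [ebv_hi]
          fin_cases i <;>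
          · simp only [ebv_lo, Fin.mk_zero, Fin.mk_one]
            simp only [Fin.zero_eta, Fin.mk_one, Th, Matrix.cons_val_zero, Matrix.cons_val_one,
              Matrix.head_cons, Matrix.cons_val_fin_one, Matrix.head_fin_const]
            simp [Finset.mul_sum, mul_ite, Finset.sum_ite_eq']
            ring
        · intro t
          rw [ebv_hi]
          fin_cases i <;>
          · simp only [ebv_lo, Fin.mk_zero, Fin.mk_one]
            simp only [Fin.zero_eta, Fin.mk_one, Th, Matrix.cons_val_zero, Matrix.cons_val_one,
              Matrix.head_cons, Matrix.cons_val_fin_one, Matrix.head_fin_const]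
            simp [Finset.mul_sum, mul_ite, Finset.sum_ite_eq']
            ring
      set ψ : (Fin 2 × Fin 4 → ℤ) →ₗ[ℤ] (Fin (2*8) → ℤ) :=
        (Pi.basisFun ℤ (Fin 2 × Fin 4)).constr ℤ (fun z => bv z.1 z.2) with hψ
      have hψmem : ∀ u, ψ u ∈ L := by
        intro u
        rw [hψ, Module.Basis.constr_apply_fintype]
        refine Submodule.sum_mem L fun z _ => Submodule.smul_mem L _ (hbvmem z.1 z.2)
      have hψinj : Function.Injective ψ := by
        have hcomp : ∀ u, (LinearMap.funLeft ℤ ℤ (fun ij : Fin 2 × Fin 4 =>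
            finProdFinEquiv (ij.1, lo ij.2))) (ψ u) = k • u := by
          intro u
          funext z
          rw [hψ, Module.Basis.constr_apply_fintype]
          simp only [LinearMap.funLeft_apply, Finset.sum_apply, Pi.smul_apply, smul_eq_mul]
          rw [Finset.sum_eq_single z]
          · simp only [Pi.basisFun_equivFun, LinearEquiv.refl_apply, ebv_lo]
            simp
            ring
          · intro w _ hw
            simp only [Pi.basisFun_equivFun, LinearEquiv.refl_apply, ebv_lo]
            have : ¬(z.1 = w.1 ∧ z.2 = w.2) := by
              intro hcon
              exact hw (Prod.ext hcon.1 hcon.2).symm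
            simp [this]
          · simp
        intro u v huv
        have h1 : k • u = k • v := by rw [← hcomp u, ← hcomp v, huv]
        funext z
        have := congrFun h1 z
        simp only [Pi.smul_apply, smul_eq_mul] at this
        exact mul_left_cancel₀ hk0 this
      have hψc : Function.Injective (ψ.codRestrict L hψmem) := by
        intro u v huv
        exact hψinj (Subtype.ext_iff.1 huv)
      calc (8:ℕ) = Module.finrank ℤ (Fin 2 × Fin 4 → ℤ) := by simp [Module.finrank_pi]
        _ ≤ Module.finrank ℤ L := LinearMap.finrank_le_finrank_of_injective hψc
    omega
  · -- isotropy
    intro x hx y hy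
    rw [nsum_bilin]
    rw [fin8_sum_split]
    obtain ⟨hx0, hx1⟩ := (hmem x).1 hx
    obtain ⟨hy0, hy1⟩ := (hmem y).1 hy
    have hm := master a b c d p q r s k
      (fun j => x (finProdFinEquiv ((0:Fin 2), lo j))) (fun j => x (finProdFinEquiv ((1:Fin 2), lo j)))
      (fun j => y (finProdFinEquiv ((0:Fin 2), lo j))) (fun j => y (finProdFinEquiv ((1:Fin 2), lo j)))
      (fun t => x (finProdFinEquiv ((0:Fin 2), hi t))) (fun t => x (finProdFinEquiv ((1:Fin 2), hi t)))
      (fun t => y (finProdFinEquiv ((0:Fin 2), hi t))) (fun t => y (finProdFinEquiv ((1:Fin 2), hi t)))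
      hk hbc rfl hx0 hx1 hy0 hy1
    rw [← hm]
    congr 1
    · refine Finset.sum_congr rfl fun j _ => ?_
      rw [dot2]
    · refine Finset.sum_congr rfl fun t _ => ?_
      rw [dot2]


lemma main2 (W : Matrix (Fin 2) (Fin 2) ℤ)
    (hbc2 : (W 0 1 - W 1 0)^2 = 1) (hD : W.det ≠ 0) :
    (∃ n : ℕ, 1 ≤ n ∧ Metabolic (nsum W n)) ↔ (det (W - Wᵀ)) * (det (W + Wᵀ)) < 0 := by
  have hdm : W.det = W 0 0 * W 1 1 - W 0 1 * W 1 0 := Matrix.det_fin_two W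
  have h1 : det (W - Wᵀ) = (W 0 1 - W 1 0)^2 := by
    rw [Matrix.det_fin_two]
    simp [Matrix.sub_apply, Matrix.transpose_apply]
    ring
  have h2 : det (W + Wᵀ) = 4 * (W 0 0 * W 1 1 - W 0 1 * W 1 0) - 1 := by
    rw [Matrix.det_fin_two]
    simp only [Matrix.add_apply, Matrix.transpose_apply]
    linear_combination -hbc2
  constructor
  · rintro ⟨n, hn, hm⟩
    by_contra h
    push_neg at h
    rw [h1, h2, hbc2, one_mul] at h
    have hpos : 0 < 4 * (W 0 0 * W 1 1) - (W 0 1 + W 1 0)^2 := by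
      have e : 4 * (W 0 0 * W 1 1) - (W 0 1 + W 1 0)^2
          = 4 * (W 0 0 * W 1 1 - W 0 1 * W 1 0) - 1 := by linear_combination -hbc2
      rw [e]
      set m := W 0 0 * W 1 1 - W 0 1 * W 1 0 with hm
      omega
    exact not_metabolic W hpos n hn hm
  · intro h
    rw [h1, h2, hbc2, one_mul] at h
    have hDneg : W 0 0 * W 1 1 - W 0 1 * W 1 0 < 0 := by omega
    obtain ⟨p, q, r, s, hpqrs⟩ :=
      Nat.sum_four_squares (1 - 4 * (W 0 0 * W 1 1 - W 0 1 * W 1 0)).toNat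
    have hk : (p:ℤ)^2 + (q:ℤ)^2 + (r:ℤ)^2 + (s:ℤ)^2
        = 1 - 4 * (W 0 0 * W 1 1 - W 0 1 * W 1 0) := by
      have := congrArg (fun t : ℕ => (t : ℤ)) hpqrs
      push_cast at this
      rw [this, Int.toNat_of_nonneg (by omega)]
    have hbc : W 0 1 - W 1 0 = 1 ∨ W 0 1 - W 1 0 = -1 := by
      rcases Int.eq_one_or_neg_one_of_mul_eq_one' (by linear_combination hbc2 :
        (W 0 1 - W 1 0) * (W 0 1 - W 1 0) = 1) with ⟨hh, _⟩ | ⟨hh, _⟩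
      · exact Or.inl hh
      · exact Or.inr hh
    exact ⟨8, by norm_num, metabolic_of W p q r s hk hbc⟩

/-- Levine: a Seifert matrix whose Alexander polynomial is an irreducible
(over `ℚ`) quadratic has finite order in the algebraic concordance group (some nonempty
block sum of copies of it is metabolic) iff `Δ_V(1) · Δ_V(-1) < 0`. -/
theorem stmt_8 {g : ℕ} (V : Matrix (Fin (2 * g)) (Fin (2 * g)) ℤ)
    (hV : SeifertMatrix V)
    (hdeg : (alexPoly V).natDegree = 2)
    (hirr : Irreducible ((alexPoly V).map (Int.castRingHom ℚ))) :
    (∃ n : ℕ, 1 ≤ n ∧ Metabolic (nsum V n)) ↔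
      (alexPoly V).eval 1 * (alexPoly V).eval (-1) < 0 := by
  have hPne : alexPoly V ≠ 0 := fun h => by rw [h] at hdeg; simp at hdeg
  have hdV : V.det ≠ 0 := by
    intro h0
    have hc0 : ((alexPoly V).map (Int.castRingHom ℚ)).coeff 0 = 0 := by
      rw [Polynomial.coeff_map, alexPoly_coeff_zero, h0, map_zero]
    have hXdvd : (X : ℚ[X]) ∣ (alexPoly V).map (Int.castRingHom ℚ) :=
      Polynomial.X_dvd_iff.2 hc0
    obtain ⟨qq, hq⟩ := hXdvd
    rcases hirr.isUnit_or_isUnit hq with hu | hu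
    · exact Polynomial.not_isUnit_X hu
    · have hnd : ((alexPoly V).map (Int.castRingHom ℚ)).natDegree = 2 := by
        rw [Polynomial.natDegree_map_eq_of_injective
          (Int.cast_injective : Function.Injective (Int.castRingHom ℚ)), hdeg]
      have : ((alexPoly V).map (Int.castRingHom ℚ)).natDegree ≤ 1 := by
        rw [hq, Polynomial.natDegree_mul Polynomial.X_ne_zero (fun hz => by
          rw [hz] at hu; exact not_isUnit_zero hu)]
        rw [Polynomial.natDegree_X, Polynomial.natDegree_eq_zero_of_isUnit hu]
      omega
  have hg : g = 1 := by
    by_contra hg1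
    rcases Nat.lt_or_ge g 1 with hlt | hge
    · interval_cases g
      · have : alexPoly V = (1 : ℤ[X]) := by
          unfold alexPoly
          haveI : IsEmpty (Fin (2 * 0)) := Fin.isEmpty'
          exact Matrix.det_isEmpty
        rw [this] at hdeg
        simp at hdeg
    · have hge2 : 2 ≤ g := by omega
      have hlt' : (alexPoly V).natDegree < 2 * g := by omega
      have := Polynomial.coeff_eq_zero_of_natDegree_lt hlt'
      rw [alexPoly_coeff_top] at this
      have hpow : ((-1 : ℤ)) ^ (2*g) = 1 := by
        rw [pow_mul]
        norm_num
      rw [hpow, one_mul] at this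
      exact hdV this
  subst hg
  have hbc2 : (V 0 1 - V 1 0)^2 = 1 := by
    have hdet : det (V - Vᵀ) = (V 0 1 - V 1 0)^2 := by
      rw [Matrix.det_fin_two]
      simp [Matrix.sub_apply, Matrix.transpose_apply]
      ring
    rcases hV with h | h
    · rw [hdet] at h; exact h
    · rw [hdet] at h
      exfalso
      nlinarith [sq_nonneg (V 0 1 - V 1 0)]
  rw [alexPoly_eval_one, alexPoly_eval_negone]
  exact main2 V hbc2 hdV
end

section
/- There do not exist polynomials f, g ∈ ℤ[t] with g monic, an integer n ≥ 0, and a sign ε ∈ {1, −1} such that ε · tⁿ · (2t² − 3t + 2) · g(t) = f(t) · t^(deg f) · f(1/t). (Hence no knot with Alexander polynomial 2t² − 3t + 2 is concordant to a fibered knot: fibered knots have monic Alexander polynomial, and concordant knots have Alexander polynomials differing, up to units ±tⁿ, by a factor of the form f(t)f(t⁻¹).) -/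
open Matrix Polynomial

private lemma aux_p_eq : (C 2 * X ^ 2 - C 3 * X + C 2 : ℤ[X])
    = C 2 * X ^ 2 + C (-3 : ℤ) * X + C 2 := by
  simp only [map_neg]; ring

private lemma aux_p_natDegree : (C 2 * X ^ 2 - C 3 * X + C 2 : ℤ[X]).natDegree = 2 := by
  rw [aux_p_eq]; exact natDegree_quadratic (by norm_num)

private lemma aux_p_leadingCoeff : (C 2 * X ^ 2 - C 3 * X + C 2 : ℤ[X]).leadingCoeff = 2 := by
  rw [aux_p_eq]; exact leadingCoeff_quadratic (by norm_num)

private lemma aux_p_ne_zero : (C 2 * X ^ 2 - C 3 * X + C 2 : ℤ[X]) ≠ 0 := by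
  intro h
  have := aux_p_natDegree
  rw [h] at this
  simp at this

private lemma aux_p_reflect : reflect 2 (C 2 * X ^ 2 - C 3 * X + C 2 : ℤ[X])
    = C 2 * X ^ 2 - C 3 * X + C 2 := by
  have h : (C 2 * X ^ 2 + C (-3 : ℤ) * X + C 2 : ℤ[X])
      = C 2 * X ^ 2 + C (-3 : ℤ) * X ^ 1 + C 2 := by rw [pow_one]
  rw [aux_p_eq, h, reflect_add, reflect_add, reflect_C_mul_X_pow,
    reflect_C_mul_X_pow, reflect_C]
  have h2 : revAt 2 2 = 0 := by rw [revAt_le (by norm_num)]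
  have h1 : revAt 2 1 = 1 := by rw [revAt_le (by norm_num)]
  rw [h1, h2]
  ring

private lemma aux_p_primitive : (C 2 * X ^ 2 - C 3 * X + C 2 : ℤ[X]).IsPrimitive := by
  intro r hr
  rw [C_dvd_iff_dvd_coeff] at hr
  have h0 := hr 0
  have h1 := hr 1
  rw [aux_p_eq] at h0 h1
  simp [coeff_add, coeff_C_mul, coeff_X_pow] at h0 h1
  have h2 : r ∣ (3 - 2 : ℤ) := dvd_sub h1 h0
  norm_num at h2
  exact isUnit_of_dvd_one h2

private lemma aux_p_irreducible : Irreducible (C 2 * X ^ 2 - C 3 * X + C 2 : ℤ[X]) := by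
  rw [Polynomial.IsPrimitive.Int.irreducible_iff_irreducible_map_cast aux_p_primitive]
  have hq : (C 2 * X ^ 2 - C 3 * X + C 2 : ℤ[X]).map (Int.castRingHom ℚ)
      = C 2 * X ^ 2 - C 3 * X + C 2 := by
    simp only [Polynomial.map_add, Polynomial.map_sub, Polynomial.map_mul, Polynomial.map_pow,
      Polynomial.map_C, Polynomial.map_X]
    norm_num
  rw [hq]
  have hd : (C 2 * X ^ 2 - C 3 * X + C 2 : ℚ[X]).natDegree = 2 := by
    have : (C 2 * X ^ 2 - C 3 * X + C 2 : ℚ[X]) = C 2 * X ^ 2 + C (-3 : ℚ) * X + C 2 := by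
      simp only [map_neg]; ring
    rw [this]; exact natDegree_quadratic (by norm_num)
  rw [irreducible_iff_roots_eq_zero_of_degree_le_three (by omega) (by omega)]
  rw [Multiset.eq_zero_iff_forall_notMem]
  intro x hx
  have h0 : (C 2 * X ^ 2 - C 3 * X + C 2 : ℚ[X]) ≠ 0 := by
    intro h; rw [h] at hd; simp at hd
  rw [mem_roots h0] at hx
  have := hx
  simp [IsRoot, eval_add, eval_sub, eval_mul, eval_pow] at this
  nlinarith [sq_nonneg (4 * x - 3), this]

private lemma aux_reflect_reflect (f : ℤ[X]) (N : ℕ) : reflect N (reflect N f) = f := by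
  ext i
  rw [coeff_reflect, coeff_reflect, revAt_invol]

private lemma aux_natDegree_reflect_le (f : ℤ[X]) (N : ℕ) (h : f.natDegree ≤ N) :
    (reflect N f).natDegree ≤ N := by
  rw [natDegree_le_iff_coeff_eq_zero]
  intro m hm
  rw [coeff_reflect, revAt_eq_self_of_lt hm]
  exact coeff_eq_zero_of_natDegree_lt (lt_of_le_of_lt h hm)

/-- there are no `f, g ∈ ℤ[t]` with `g` monic, `n ≥ 0` and sign `ε` with
`ε tⁿ (2t² - 3t + 2) g(t) = f(t) · t^{deg f} f(1/t)`; hence no knot with Alexander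
polynomial `2t² - 3t + 2` is concordant to a fibered knot. -/
theorem stmt_10 :
    ¬ ∃ (f gp : Polynomial ℤ) (n : ℕ) (ε : ℤ), gp.Monic ∧ (ε = 1 ∨ ε = -1) ∧
      C ε * X ^ n * (C 2 * X ^ 2 - C 3 * X + C 2) * gp
        = f * Polynomial.reflect f.natDegree f := by
  rintro ⟨f, g, n, ε, hg, hε, heq⟩
  set p : ℤ[X] := C 2 * X ^ 2 - C 3 * X + C 2 with hpdef
  have hirr : Irreducible p := aux_p_irreducible
  have hprime : Prime p := hirr.prime
  have hp0 : p ≠ 0 := aux_p_ne_zero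
  have hεu : IsUnit ε := by rcases hε with h | h <;> simp [h]
  have hCε : IsUnit (C ε : ℤ[X]) := hεu.map C
  have hLHS : C ε * X ^ n * p * g ≠ 0 :=
    mul_ne_zero (mul_ne_zero (mul_ne_zero hCε.ne_zero (pow_ne_zero _ X_ne_zero)) hp0) hg.ne_zero
  have hf0 : f ≠ 0 := by
    intro h
    rw [h, zero_mul] at heq
    exact hLHS heq
  set d := f.natDegree with hd
  set r := reflect d f with hr
  -- p divides f
  have hdvd : p ∣ f * r := ⟨C ε * X ^ n * g, by rw [← heq]; ring⟩
  have hpf : p ∣ f := by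
    rcases hprime.2.2 f r hdvd with h | h
    · exact h
    · obtain ⟨h₁, hh₁⟩ := h
      have hr0 : r ≠ 0 := by
        rw [hr, Ne, reflect_eq_zero_iff]
        exact hf0
      have hh0 : h₁ ≠ 0 := by rintro rfl; rw [mul_zero] at hh₁; exact hr0 hh₁
      have hdr : (p * h₁).natDegree ≤ d := by
        rw [← hh₁]
        exact aux_natDegree_reflect_le f d le_rfl
      have hdeg : (p * h₁).natDegree = 2 + h₁.natDegree := by
        rw [natDegree_mul hp0 hh0, aux_p_natDegree]
      have hf_eq : f = reflect d (p * h₁) := by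
        rw [← hh₁, hr, aux_reflect_reflect]
      have hsplit : reflect d (p * h₁) = p * reflect (d - 2) h₁ := by
        have h2d : 2 + (d - 2) = d := by omega
        conv_lhs => rw [← h2d]
        rw [reflect_mul p h₁ (by rw [aux_p_natDegree]) (by omega), aux_p_reflect]
      exact ⟨reflect (d - 2) h₁, by rw [hf_eq, hsplit]⟩
  obtain ⟨h₁, hfh⟩ := hpf
  have hh0 : h₁ ≠ 0 := by rintro rfl; rw [mul_zero] at hfh; exact hf0 hfh
  have hdeg : d = 2 + h₁.natDegree := by
    rw [hd, hfh, natDegree_mul hp0 hh0, aux_p_natDegree]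
  have hrsplit : r = p * reflect h₁.natDegree h₁ := by
    rw [hr, hfh, hdeg, reflect_mul p h₁ (by rw [aux_p_natDegree]) le_rfl, aux_p_reflect]
  -- cancel p in the equation
  have hcancel : C ε * X ^ n * g = p * (h₁ * reflect h₁.natDegree h₁) := by
    have : p * (C ε * X ^ n * g) = p * (p * (h₁ * reflect h₁.natDegree h₁)) := by
      rw [← mul_assoc]
      calc p * (C ε * X ^ n) * g = C ε * X ^ n * p * g := by ring
        _ = f * r := heq
        _ = p * (p * (h₁ * reflect h₁.natDegree h₁)) := by rw [hfh, hrsplit]; ring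
    exact mul_left_cancel₀ hp0 this
  have hpdvd : p ∣ C ε * (X ^ n * g) := ⟨h₁ * reflect h₁.natDegree h₁, by rw [← hcancel]; ring⟩
  rcases hprime.2.2 _ _ hpdvd with h | h
  · exact hirr.not_isUnit (isUnit_of_dvd_unit h hCε)
  · rcases hprime.2.2 _ _ h with h' | h'
    · have hpX : p ∣ X := hprime.dvd_of_dvd_pow h'
      have := natDegree_le_of_dvd hpX X_ne_zero
      rw [aux_p_natDegree, natDegree_X] at this
      omega
    · obtain ⟨k, hk⟩ := h'
      have hk0 : k ≠ 0 := by rintro rfl; rw [mul_zero] at hk; exact hg.ne_zero hk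
      have : (1 : ℤ) = 2 * k.leadingCoeff := by
        have := hg.leadingCoeff
        rw [hk, leadingCoeff_mul, aux_p_leadingCoeff] at this
        omega
      omega
end

section
/- (Fox–Milnor polynomial invariants.) Let p ∈ ℤ[t] be an irreducible polynomial with p(0) ≠ 0 that is symmetric, i.e. t^(deg p) · p(1/t) = ± p(t). If V is a metabolic abstract Seifert matrix, then the multiplicity of p as a factor of the Alexander polynomial Δ_V(t) is even. -/
open Matrix Polynomial

namespace FMAux
variable {R : Type*} [CommRing R]

lemma reflect_reflect (N : ℕ) (f : R[X]) : reflect N (reflect N f) = f := by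
  ext i
  rw [coeff_reflect, coeff_reflect, revAt_invol]

lemma natDegree_reflect_le {N : ℕ} {f : R[X]} (h : f.natDegree ≤ N) :
    (reflect N f).natDegree ≤ N := by
  apply natDegree_le_iff_coeff_eq_zero.mpr
  intro m hm
  rw [coeff_reflect, revAt_eq_self_of_lt hm]
  exact coeff_eq_zero_of_natDegree_lt (lt_of_le_of_lt h hm)

lemma reflect_pow (p : ℤ[X]) (j : ℕ) :
    reflect (j * p.natDegree) (p ^ j) = (reflect p.natDegree p) ^ j := by
  induction j with
  | zero => simp only [pow_zero, Nat.zero_mul]; rw [← C_1, reflect_C, pow_zero, mul_one]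
  | succ j ih =>
    have h1 : (p ^ j).natDegree ≤ j * p.natDegree := natDegree_pow_le.trans le_rfl
    rw [pow_succ, pow_succ, ← ih, show (j+1) * p.natDegree = j * p.natDegree + p.natDegree by ring,
      reflect_mul _ _ h1 le_rfl]

lemma dvd_reflect {p : ℤ[X]} (hp0 : p ≠ 0)
    (hsym : reflect p.natDegree p = p ∨ reflect p.natDegree p = -p)
    {q : ℤ[X]} (hq : q ≠ 0) {g : ℕ} (hdeg : q.natDegree ≤ g) (j : ℕ) (hdvd : p ^ j ∣ q) :
    p ^ j ∣ reflect g q := by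
  obtain ⟨h, rfl⟩ := hdvd
  have hh : h ≠ 0 := right_ne_zero_of_mul hq
  have hdm : (p ^ j * h).natDegree = j * p.natDegree + h.natDegree := by
    rw [natDegree_mul (pow_ne_zero _ hp0) hh, natDegree_pow]
  have hjg : j * p.natDegree ≤ g := by omega
  have hhg : h.natDegree ≤ g - j * p.natDegree := by omega
  rw [show g = j * p.natDegree + (g - j * p.natDegree) by omega,
    reflect_mul _ _ (natDegree_pow_le.trans le_rfl) hhg, reflect_pow]
  rcases hsym with hs | hs <;> rw [hs]
  · exact Dvd.dvd.mul_right dvd_rfl _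
  · rw [neg_pow]
    exact Dvd.dvd.mul_right (Dvd.dvd.mul_left dvd_rfl _) _

lemma dvd_reflect_iff {p : ℤ[X]} (hp0 : p ≠ 0)
    (hsym : reflect p.natDegree p = p ∨ reflect p.natDegree p = -p)
    {q : ℤ[X]} (hq : q ≠ 0) {g : ℕ} (hdeg : q.natDegree ≤ g) (j : ℕ) :
    p ^ j ∣ q ↔ p ^ j ∣ reflect g q := by
  constructor
  · exact dvd_reflect hp0 hsym hq hdeg j
  · intro hd
    have hq' : reflect g q ≠ 0 := by rwa [Ne, reflect_eq_zero_iff]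
    have := dvd_reflect hp0 hsym hq' (natDegree_reflect_le hdeg) j hd
    rwa [reflect_reflect] at this

lemma reflect_prod_linear {ι : Type*} (s : Finset ι) (a b : ι → ℤ) :
    reflect s.card (∏ i ∈ s, (C (a i) - X * C (b i))) = ∏ i ∈ s, (X * C (a i) - C (b i)) := by
  classical
  induction s using Finset.induction with
  | empty =>
    simp only [Finset.prod_empty, Finset.card_empty]
    rw [← C_1, reflect_C, pow_zero, mul_one]
  | @insert i s hi ih =>
    have hlin : ∀ j, (C (a j) - X * C (b j)).natDegree ≤ 1 := fun j =>
      (natDegree_sub_le _ _).trans (max_le (by simp) (natDegree_mul_le.trans (by simp)))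
    have hprod : (∏ j ∈ s, (C (a j) - X * C (b j))).natDegree ≤ s.card := by
      refine (natDegree_prod_le s _).trans ?_
      refine le_trans (Finset.sum_le_sum (fun j _ => hlin j)) ?_
      simp
    rw [Finset.prod_insert hi, Finset.prod_insert hi, Finset.card_insert_of_notMem hi,
      show s.card + 1 = 1 + s.card by ring, reflect_mul _ _ (hlin i) hprod, ih]
    congr 1
    rw [reflect_sub, reflect_C, mul_comm X (C (b i)), ← pow_one X, reflect_C_mul_X_pow]
    simp [revAt_le]
    ring

lemma reflect_det (n : ℕ) (A B : Matrix (Fin n) (Fin n) ℤ) :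
    reflect n ((A.map C - (X : ℤ[X]) • B.map C).det) =
      ((X : ℤ[X]) • A.map C - B.map C).det := by
  classical
  rw [det_apply, det_apply]
  have : reflect n (∑ σ : Equiv.Perm (Fin n),
      Equiv.Perm.sign σ • ∏ i, (A.map C - (X : ℤ[X]) • B.map C) (σ i) i)
      = ∑ σ : Equiv.Perm (Fin n), reflect n
        (Equiv.Perm.sign σ • ∏ i, (A.map C - (X : ℤ[X]) • B.map C) (σ i) i) := by
    exact map_sum (AddMonoidHom.mk' (reflect n) (fun f g => reflect_add f g n)) _ _
  rw [this]
  apply Finset.sum_congr rfl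
  intro σ _
  have hentry : ∀ i, (A.map C - (X : ℤ[X]) • B.map C) (σ i) i
      = C (A (σ i) i) - X * C (B (σ i) i) := by
    intro i; simp [Matrix.sub_apply, Matrix.smul_apply, Matrix.map_apply, smul_eq_mul]
  have hentry' : ∀ i, ((X : ℤ[X]) • A.map C - B.map C) (σ i) i
      = X * C (A (σ i) i) - C (B (σ i) i) := by
    intro i; simp [Matrix.sub_apply, Matrix.smul_apply, Matrix.map_apply, smul_eq_mul]
  simp only [hentry, hentry']
  have hsmul : ∀ q : ℤ[X], (Equiv.Perm.sign σ) • q = C ((Equiv.Perm.sign σ : ℤ)) * q := by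
    intro q
    rw [Units.smul_def, smul_eq_C_mul]
  rw [hsmul, hsmul, reflect_C_mul]
  congr 1
  have := reflect_prod_linear (Finset.univ : Finset (Fin n)) (fun i => A (σ i) i) (fun i => B (σ i) i)
  simpa using this

lemma natDegree_det_le (n : ℕ) (A B : Matrix (Fin n) (Fin n) ℤ) :
    ((A.map C - (X : ℤ[X]) • B.map C).det).natDegree ≤ n := by
  classical
  rw [det_apply]
  apply natDegree_sum_le_of_forall_le
  intro σ _
  have hsmul : ∀ q : ℤ[X], (Equiv.Perm.sign σ) • q = C ((Equiv.Perm.sign σ : ℤ)) * q := by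
    intro q
    rw [Units.smul_def, smul_eq_C_mul]
  rw [hsmul]
  apply natDegree_mul_le.trans
  rw [natDegree_C, zero_add]
  refine (natDegree_prod_le Finset.univ _).trans ?_
  have hb : ∀ i : Fin n, ((A.map C - (X : ℤ[X]) • B.map C) (σ i) i).natDegree ≤ 1 := by
    intro i
    have : (A.map C - (X : ℤ[X]) • B.map C) (σ i) i = C (A (σ i) i) - X * C (B (σ i) i) := by
      simp [Matrix.sub_apply, Matrix.smul_apply, Matrix.map_apply, smul_eq_mul]
    rw [this]
    exact (natDegree_sub_le _ _).trans (max_le (by simp) (natDegree_mul_le.trans (by simp)))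
  refine le_trans (Finset.sum_le_sum (fun i _ => hb i)) ?_
  simp

end FMAux

/-- Fox–Milnor: if `p ∈ ℤ[t]` is irreducible, has `p(0) ≠ 0` and is
symmetric (`t^{deg p} p(1/t) = ± p(t)`), then `p` occurs with even multiplicity in the
Alexander polynomial of any metabolic Seifert matrix. -/

theorem stmt_13 {g : ℕ} (V : Matrix (Fin (2 * g)) (Fin (2 * g)) ℤ)
    (hV : SeifertMatrix V) (hM : Metabolic V)
    (p : Polynomial ℤ) (hirr : Irreducible p) (h0 : p.coeff 0 ≠ 0)
    (hsym : Polynomial.reflect p.natDegree p = p ∨ Polynomial.reflect p.natDegree p = -p) :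
    ∀ k : ℕ, p ^ k ∣ alexPoly V → ¬ p ^ (k + 1) ∣ alexPoly V → Even k := by
  classical
  obtain ⟨L, ⟨L', hc⟩, hrk, hvan⟩ := hM
  haveI : Module.Finite ℤ L := Module.Finite.iff_fg.mpr (IsNoetherian.noetherian L)
  haveI : Module.Finite ℤ L' := Module.Finite.iff_fg.mpr (IsNoetherian.noetherian L')
  haveI : Module.Free ℤ L := inferInstance
  haveI : Module.Free ℤ L' := inferInstance
  have hrkL : Module.finrank ℤ L = g := by omega
  have hpi : Module.finrank ℤ (Fin (2*g) → ℤ) = 2*g := by simp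
  have hrkL' : Module.finrank ℤ L' = g := by
    have h1 := LinearEquiv.finrank_eq (Submodule.prodEquivOfIsCompl L L' hc)
    rw [Module.finrank_prod, hpi] at h1
    omega
  set bL := Module.finBasisOfFinrankEq ℤ L hrkL with hbLdef
  set bL' := Module.finBasisOfFinrankEq ℤ L' hrkL' with hbL'def
  set b : Module.Basis (Fin g ⊕ Fin g) ℤ (Fin (2*g) → ℤ) :=
    (bL.prod bL').map (Submodule.prodEquivOfIsCompl L L' hc) with hbdef
  have hbL : ∀ i, (b (Sum.inl i)) ∈ L := by
    intro i
    simp only [hbdef, Module.Basis.map_apply, Module.Basis.prod_apply, Sum.elim_inl, Function.comp_apply,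
      LinearMap.coe_inl, Submodule.coe_prodEquivOfIsCompl', Submodule.coe_zero, add_zero]
    exact Submodule.coe_mem _
  -- matrices
  set M : Matrix (Fin (2*g)) (Fin (2*g)) ℤ[X] :=
    V.map (C : ℤ → ℤ[X]) - (X : ℤ[X]) • Vᵀ.map (C : ℤ → ℤ[X]) with hMdef
  have halex : alexPoly V = M.det := rfl
  set P : Matrix (Fin g ⊕ Fin g) (Fin (2*g)) ℤ := Matrix.of (fun i j => b i j) with hP
  set N : Matrix (Fin g ⊕ Fin g) (Fin g ⊕ Fin g) ℤ[X] :=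
    P.map (C : ℤ → ℤ[X]) * M * (P.map (C : ℤ → ℤ[X]))ᵀ with hNdef
  -- entry formula
  have hN : ∀ i j, N i j =
      C (b i ⬝ᵥ V.mulVec (b j)) - X * C (b j ⬝ᵥ V.mulVec (b i)) := by
    intro i j
    have : N i j = ∑ l, (∑ k, C (P i k) * M k l) * C (P j l) := by
      simp [hNdef, Matrix.mul_apply, Matrix.transpose_apply, Matrix.map_apply,
        Finset.sum_mul]
    rw [this]
    have hMkl : ∀ k l, M k l = C (V k l) - X * C (V l k) := by
      intro k l
      simp [hMdef, Matrix.sub_apply, Matrix.smul_apply, Matrix.map_apply, smul_eq_mul]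
    simp only [hMkl]
    have expand : ∀ l, (∑ k, C (P i k) * (C (V k l) - X * C (V l k))) * C (P j l)
        = C (∑ k, P i k * V k l * P j l) - X * C (∑ k, P i k * V l k * P j l) := by
      intro l
      rw [Finset.sum_mul]
      rw [map_sum (C : ℤ →+* ℤ[X]), map_sum (C : ℤ →+* ℤ[X]), Finset.mul_sum,
        ← Finset.sum_sub_distrib]
      apply Finset.sum_congr rfl
      intro k _
      simp only [_root_.map_mul]
      ring
    simp only [expand]
    rw [Finset.sum_sub_distrib, ← map_sum (C : ℤ →+* ℤ[X]), ← Finset.mul_sum,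
      ← map_sum (C : ℤ →+* ℤ[X])]
    congr 1
    · congr 1
      simp only [dotProduct, Matrix.mulVec, dotProduct]
      rw [Finset.sum_comm]
      apply Finset.sum_congr rfl
      intro k _
      rw [Finset.mul_sum]
      apply Finset.sum_congr rfl
      intro l _
      simp only [hP, Matrix.of_apply]
      ring
    · congr 2
      simp only [dotProduct, Matrix.mulVec, dotProduct]
      apply Finset.sum_congr rfl
      intro l _
      rw [Finset.mul_sum]
      apply Finset.sum_congr rfl
      intro k _
      simp only [hP, Matrix.of_apply]
      ring
  -- det N = det M
  set e2 : (Fin g ⊕ Fin g) ≃ Fin (2*g) := finSumFinEquiv.trans (finCongr (two_mul g).symm)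
    with he2
  set P' : Matrix (Fin (2*g)) (Fin (2*g)) ℤ := P.submatrix (⇑e2.symm) id with hP'
  have hPmat : P'ᵀ = (Pi.basisFun ℤ (Fin (2*g))).toMatrix ⇑(b.reindex e2) := by
    ext i j
    simp [hP', Module.Basis.toMatrix_apply, Pi.basisFun_repr, Module.Basis.reindex_apply, hP,
      Matrix.transpose_apply]
  have hUnit : IsUnit P'.det := by
    have h1 := Module.Basis.toMatrix_mul_toMatrix_flip (Pi.basisFun ℤ (Fin (2*g))) (b.reindex e2)
    have h2 : ((Pi.basisFun ℤ (Fin (2*g))).toMatrix ⇑(b.reindex e2)).det *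
        ((b.reindex e2).toMatrix ⇑(Pi.basisFun ℤ (Fin (2*g)))).det = 1 := by
      rw [← Matrix.det_mul, h1, Matrix.det_one]
    have := IsUnit.of_mul_eq_one _ h2
    rwa [← hPmat, Matrix.det_transpose] at this
  have hdetN : N.det = M.det := by
    have hPsub : P = P'.submatrix ⇑e2 id := by
      rw [hP']
      ext i j
      simp [Matrix.submatrix_apply]
    have hm1 : (P'.submatrix (⇑e2) id).map (C : ℤ → ℤ[X]) =
        (P'.map (C : ℤ → ℤ[X])).submatrix (⇑e2) id := rfl
    have key : ((P'.map (C : ℤ → ℤ[X])) * M * (P'.map (C : ℤ → ℤ[X]))ᵀ).submatrix ⇑e2 ⇑e2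
        = (P'.map (C : ℤ → ℤ[X])).submatrix (⇑e2) id * M *
          ((P'.map (C : ℤ → ℤ[X]))ᵀ).submatrix id ⇑e2 := by
      rw [Matrix.submatrix_mul _ _ ⇑e2 id ⇑e2 Function.bijective_id,
        Matrix.submatrix_mul _ _ ⇑e2 id id Function.bijective_id, Matrix.submatrix_id_id]
    have hN2 : N = ((P'.map (C : ℤ → ℤ[X])) * M * (P'.map (C : ℤ → ℤ[X]))ᵀ).submatrix ⇑e2 ⇑e2 := by
      rw [hNdef, hPsub, hm1, Matrix.transpose_submatrix, key]
    rw [hN2, Matrix.det_submatrix_equiv_self, Matrix.det_mul, Matrix.det_mul,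
      Matrix.det_transpose]
    have hmapdet : (P'.map (C : ℤ → ℤ[X])).det = C P'.det := by
      rw [← RingHom.mapMatrix_apply, ← RingHom.map_det]
    rw [hmapdet]
    rcases Int.isUnit_iff.mp hUnit with h | h <;> rw [h] <;> simp
  -- block form
  set A : Matrix (Fin g) (Fin g) ℤ :=
    Matrix.of (fun i j => b (Sum.inl i) ⬝ᵥ V.mulVec (b (Sum.inr j))) with hA
  set Bm : Matrix (Fin g) (Fin g) ℤ :=
    Matrix.of (fun i j => b (Sum.inr i) ⬝ᵥ V.mulVec (b (Sum.inl j))) with hBm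
  set f : ℤ[X] := (A.map (C : ℤ → ℤ[X]) - (X : ℤ[X]) • Bmᵀ.map (C : ℤ → ℤ[X])).det with hf
  set ft : ℤ[X] := (Bm.map (C : ℤ → ℤ[X]) - (X : ℤ[X]) • Aᵀ.map (C : ℤ → ℤ[X])).det with hft
  have hNblocks : N = Matrix.fromBlocks 0
      (A.map (C : ℤ → ℤ[X]) - (X : ℤ[X]) • Bmᵀ.map (C : ℤ → ℤ[X]))
      (Bm.map (C : ℤ → ℤ[X]) - (X : ℤ[X]) • Aᵀ.map (C : ℤ → ℤ[X])) (N.toBlocks₂₂) := by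
    ext i j
    rcases i with i | i <;> rcases j with j | j
    · rw [hN]
      simp [hvan _ (hbL i) _ (hbL j), hvan _ (hbL j) _ (hbL i)]
    · rw [hN]
      simp [hA, hBm, Matrix.fromBlocks, Matrix.sub_apply, Matrix.smul_apply,
        Matrix.map_apply, smul_eq_mul]
    · rw [hN]
      simp [hA, hBm, Matrix.fromBlocks, Matrix.sub_apply, Matrix.smul_apply,
        Matrix.map_apply, smul_eq_mul]
    · simp [Matrix.fromBlocks, Matrix.toBlocks₂₂]
  -- sign decomposition
  have hsigndec : ∃ ε : ℤ, (ε = 1 ∨ ε = -1) ∧ N.det = C ε * (f * ft) := by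
    set σ : Equiv.Perm (Fin g ⊕ Fin g) := Equiv.sumComm (Fin g) (Fin g) with hσ
    have hswap : N.submatrix (⇑σ) id = Matrix.fromBlocks
        (Bm.map (C : ℤ → ℤ[X]) - (X : ℤ[X]) • Aᵀ.map (C : ℤ → ℤ[X])) (N.toBlocks₂₂) 0
        (A.map (C : ℤ → ℤ[X]) - (X : ℤ[X]) • Bmᵀ.map (C : ℤ → ℤ[X])) := by
      conv_lhs => rw [hNblocks]
      ext i j
      rcases i with i | i <;> rcases j with j | j <;>
        simp [Matrix.submatrix_apply, hσ, Matrix.fromBlocks]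
    have hdet := Matrix.det_permute σ N
    rw [hswap, Matrix.det_fromBlocks_zero₂₁] at hdet
    refine ⟨(Equiv.Perm.sign σ : ℤ), ?_, ?_⟩
    · rcases Int.units_eq_one_or (Equiv.Perm.sign σ) with h | h <;> rw [h] <;> simp
    · rw [← hf, ← hft] at hdet
      rcases Int.units_eq_one_or (Equiv.Perm.sign σ) with h | h <;> rw [h] at hdet ⊢ <;>
        simp at hdet ⊢
      · linear_combination -hdet
      · linear_combination hdet
  obtain ⟨ε, hε, hNdet⟩ := hsigndec
  have hΔeq : alexPoly V = C ε * (f * ft) := by rw [halex, ← hdetN, hNdet]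
  -- nonvanishing
  have hΔ0 : alexPoly V ≠ 0 := by
    intro h
    have h1 : ((V.map (C : ℤ → ℤ[X]) - (X : ℤ[X]) • Vᵀ.map (C : ℤ → ℤ[X])).map
        (eval 1)).det = (V - Vᵀ).det := by
      congr 1
      ext i j
      simp [Matrix.map_apply, Matrix.sub_apply, Matrix.smul_apply, smul_eq_mul]
    have h2 : (evalRingHom 1) (alexPoly V) = (V - Vᵀ).det := by
      rw [alexPoly, RingHom.map_det]
      rw [← h1]
      rfl
    rw [h, map_zero] at h2
    rcases hV with h3 | h3 <;> rw [← h2] at h3 <;> omega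
  have hCεunit : IsUnit (C ε) := by
    rcases hε with h | h <;> rw [h] <;> simp
  have hffne : f * ft ≠ 0 := by
    intro h
    rw [hΔeq, h, mul_zero] at hΔ0
    exact hΔ0 rfl
  have hf0 : f ≠ 0 := left_ne_zero_of_mul hffne
  have hft0 : ft ≠ 0 := right_ne_zero_of_mul hffne
  -- reflect relation
  have hftrefl : ft = (-1 : ℤ[X]) ^ g * reflect g f := by
    have htr : (Bm.map (C : ℤ → ℤ[X]) - (X : ℤ[X]) • Aᵀ.map (C : ℤ → ℤ[X]))ᵀ
        = (-1 : ℤ[X]) • ((X : ℤ[X]) • A.map (C : ℤ → ℤ[X]) - Bmᵀ.map (C : ℤ → ℤ[X])) := by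
      ext i j
      simp only [Matrix.transpose_apply, Matrix.sub_apply, Matrix.smul_apply,
        Matrix.map_apply, smul_eq_mul, Matrix.neg_apply, neg_sub]
      ring
    have h1 : ft = ((Bm.map (C : ℤ → ℤ[X]) - (X : ℤ[X]) • Aᵀ.map (C : ℤ → ℤ[X]))ᵀ).det := by
      rw [Matrix.det_transpose]
    rw [h1, htr, Matrix.det_smul, ← FMAux.reflect_det g A Bmᵀ, ← hf]
    simp
  have hdegf : f.natDegree ≤ g := by
    rw [hf]
    exact FMAux.natDegree_det_le g A Bmᵀ
  have hp0 : p ≠ 0 := hirr.ne_zero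
  have hprime : Prime p := hirr.prime
  have hu1 : IsUnit ((-1 : ℤ[X]) ^ g) := (isUnit_one.neg).pow g
  have hiff : ∀ j : ℕ, (p ^ j ∣ f ↔ p ^ j ∣ ft) := by
    intro j
    rw [hftrefl]
    constructor
    · intro h
      exact Dvd.dvd.mul_left (FMAux.dvd_reflect hp0 hsym hf0 hdegf j h) _
    · intro h
      have h2 : p ^ j ∣ reflect g f := (hu1.dvd_mul_left).mp h
      exact (FMAux.dvd_reflect_iff hp0 hsym hf0 hdegf j).mpr h2
  -- conclusion
  intro k hk hk1
  obtain ⟨a, f', hpf', hfe⟩ := WfDvdMonoid.max_power_factor hf0 hirr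
  have hfa : p ^ a ∣ f := ⟨f', hfe⟩
  have hfa1 : ¬ p ^ (a+1) ∣ f := by
    rintro ⟨c, hc⟩
    apply hpf'
    refine ⟨c, mul_left_cancel₀ (pow_ne_zero a hp0) ?_⟩
    rw [← hfe, hc]
    ring
  have hta : p ^ a ∣ ft := (hiff a).mp hfa
  have hta1 : ¬ p ^ (a+1) ∣ ft := fun h => hfa1 ((hiff (a+1)).mpr h)
  obtain ⟨t', hte⟩ := hta
  have hpt' : ¬ p ∣ t' := by
    rintro ⟨c, hc⟩
    exact hta1 ⟨c, by rw [hte, hc]; ring⟩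
  have hpf'2 : ¬ p ∣ f' := by
    rintro ⟨c, hc⟩
    exact hpf' ⟨c, hc⟩
  have h2a : p ^ (2*a) ∣ f * ft := ⟨f' * t', by rw [hfe, hte]; ring⟩
  have h2a1 : ¬ p ^ (2*a+1) ∣ f * ft := by
    rintro ⟨c, hc⟩
    have hcanc : f' * t' = p * c := by
      apply mul_left_cancel₀ (pow_ne_zero (2*a) hp0)
      rw [show p ^ (2*a) * (f' * t') = f * ft by rw [hfe, hte]; ring, hc]
      ring
    rcases hprime.2.2 f' t' ⟨c, hcanc⟩ with h | h
    · exact hpf'2 h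
    · exact hpt' h
  have hεsq : C ε * C ε = 1 := by
    rcases hε with h | h <;> rw [h] <;> simp
  have hkff : p ^ k ∣ f * ft := by
    have h1 : p ^ k ∣ C ε * (f * ft) := by rw [← hΔeq]; exact hk
    have h2 : p ^ k ∣ C ε * (C ε * (f * ft)) := Dvd.dvd.mul_left h1 _
    rwa [← mul_assoc, hεsq, one_mul] at h2
  have hk1ff : ¬ p ^ (k+1) ∣ f * ft := by
    intro h
    apply hk1
    rw [hΔeq]
    exact Dvd.dvd.mul_left h _
  have hk2a : k = 2*a := by
    rcases Nat.lt_or_ge k (2*a) with h | h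
    · exfalso
      exact hk1ff ((pow_dvd_pow p (by omega)).trans h2a)
    · rcases Nat.lt_or_ge (2*a) k with h' | h'
      · exfalso
        exact h2a1 ((pow_dvd_pow p (by omega)).trans hkff)
      · omega
  exact ⟨a, by omega⟩
end

section
/- If V is a metabolic abstract Seifert matrix, then |det(V + Vᵀ)| is the square of an odd integer. (In knot-theoretic terms: the determinant |Δ_K(−1)| of a slice knot is an odd perfect square.) -/
open Matrix Polynomial

/-- if `V` is a metabolic abstract Seifert matrix then `|det (V + Vᵀ)|`
is the square of an odd integer (the determinant of a slice knot is an odd square). -/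
theorem stmt_14 {g : ℕ} (V : Matrix (Fin (2 * g)) (Fin (2 * g)) ℤ)
    (hV : SeifertMatrix V) (hM : Metabolic V) :
    ∃ m : ℕ, Odd m ∧ ((V + Vᵀ).det).natAbs = m ^ 2 := by
  have hodd : Odd ((V + Vᵀ).det) := by
    have h2 : (Int.castRingHom (ZMod 2)) ((V + Vᵀ).det)
        = (Int.castRingHom (ZMod 2)) ((V - Vᵀ).det) := by
      rw [(Int.castRingHom (ZMod 2)).map_det, (Int.castRingHom (ZMod 2)).map_det]
      congr 1
      ext i j
      simp [sub_eq_add_neg, CharTwo.neg_eq]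
    rw [← Int.not_even_iff_odd]
    intro hdvd
    obtain ⟨r, hr⟩ := hdvd
    rw [hr] at h2
    have h0 : (Int.castRingHom (ZMod 2)) (r + r) = 0 := by
      simp only [map_add, CharTwo.add_self_eq_zero]
    rw [h0] at h2
    rcases hV with h | h <;> rw [h] at h2 <;> simp at h2
  obtain ⟨L, ⟨L', hcompl⟩, hrank, hvan⟩ := hM
  have hLg : Module.finrank ℤ L = g := by omega
  let e0 : (L × L') ≃ₗ[ℤ] (Fin (2*g) → ℤ) := Submodule.prodEquivOfIsCompl L L' hcompl
  have hL'g : Module.finrank ℤ L' = g := by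
    have h1 : Module.finrank ℤ (L × L') = Module.finrank ℤ (Fin (2*g) → ℤ) := e0.finrank_eq
    rw [Module.finrank_prod, Module.finrank_pi, hLg] at h1
    simp at h1; omega
  let bL : Module.Basis (Fin g) ℤ L := (Module.finBasis ℤ L).reindex (finCongr hLg)
  let bL' : Module.Basis (Fin g) ℤ L' := (Module.finBasis ℤ L').reindex (finCongr hL'g)
  let e : (Fin g ⊕ Fin g) ≃ Fin (2*g) := finSumFinEquiv.trans (finCongr (by omega))
  let b : Module.Basis (Fin (2*g)) ℤ (Fin (2*g) → ℤ) := (((bL.prod bL').map e0).reindex e)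
  have hbL : ∀ i : Fin g, b (e (Sum.inl i)) ∈ L := by
    intro i
    simp only [b, e0, Module.Basis.reindex_apply, Equiv.symm_apply_apply, Module.Basis.map_apply,
      Module.Basis.prod_apply, Sum.elim_inl, Submodule.coe_prodEquivOfIsCompl']
    simp
  -- change of basis matrix
  let P : Matrix (Fin (2*g)) (Fin (2*g)) ℤ := (Pi.basisFun ℤ (Fin (2*g))).toMatrix b
  have hP : ∀ i j, P i j = b j i := fun i j => by simp [P, Module.Basis.toMatrix_apply]
  have hPunit : IsUnit P.det := by
    have := Module.Basis.toMatrix_mul_toMatrix_flip (Pi.basisFun ℤ (Fin (2*g))) b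
    exact IsUnit.of_mul_eq_one _ (by rw [← Matrix.det_mul, this, Matrix.det_one])
  let W : Matrix (Fin (2*g)) (Fin (2*g)) ℤ := Pᵀ * V * P
  have hWentry : ∀ i j, W i j = (b i) ⬝ᵥ V.mulVec (b j) := by
    intro i j
    simp only [W, Matrix.mul_apply, Matrix.transpose_apply, dotProduct, Matrix.mulVec, hP,
      Finset.sum_mul, Finset.mul_sum]
    rw [Finset.sum_comm]
    refine Finset.sum_congr rfl fun k _ => Finset.sum_congr rfl fun l _ => by ring
  have hsym : (W + Wᵀ) = Pᵀ * (V + Vᵀ) * P := by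
    simp only [W, Matrix.transpose_mul, Matrix.transpose_transpose, Matrix.mul_add,
      Matrix.add_mul, Matrix.mul_assoc]
  have hdetWV : (W + Wᵀ).det = P.det ^ 2 * (V + Vᵀ).det := by
    rw [hsym, Matrix.det_mul, Matrix.det_mul, Matrix.det_transpose]; ring
  -- block structure
  let M : Matrix (Fin g ⊕ Fin g) (Fin g ⊕ Fin g) ℤ := (W + Wᵀ).submatrix e e
  have hdetM : M.det = (W + Wᵀ).det := Matrix.det_submatrix_equiv_self e _
  have hM11 : M.toBlocks₁₁ = 0 := by
    ext i j
    have h1 : W (e (Sum.inl i)) (e (Sum.inl j)) = 0 := by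
      rw [hWentry]; exact hvan _ (hbL i) _ (hbL j)
    have h2 : W (e (Sum.inl j)) (e (Sum.inl i)) = 0 := by
      rw [hWentry]; exact hvan _ (hbL j) _ (hbL i)
    simp [M, Matrix.toBlocks₁₁, Matrix.submatrix_apply, h1, h2]
  have hM21 : M.toBlocks₂₁ = (M.toBlocks₁₂)ᵀ := by
    ext i j
    simp only [M, Matrix.toBlocks₂₁, Matrix.toBlocks₁₂, Matrix.transpose_apply, Matrix.of_apply,
      Matrix.submatrix_apply, Matrix.add_apply, Matrix.transpose_apply]
    ring
  let B := M.toBlocks₁₂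
  let D := M.toBlocks₂₂
  have hMblocks : M = Matrix.fromBlocks 0 B Bᵀ D := by
    rw [← hM11, ← hM21]; exact (Matrix.fromBlocks_toBlocks M).symm
  let J : Matrix (Fin g ⊕ Fin g) (Fin g ⊕ Fin g) ℤ := Matrix.fromBlocks 0 1 1 0
  have hJ2 : J * J = 1 := by
    simp [J, Matrix.fromBlocks_multiply, ← Matrix.fromBlocks_one]
  have hJdet : J.det = 1 ∨ J.det = -1 := by
    have : J.det * J.det = 1 := by rw [← Matrix.det_mul, hJ2, Matrix.det_one]
    rcases Int.isUnit_iff.mp (IsUnit.of_mul_eq_one _ this) with h | h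
    · exact Or.inl h
    · exact Or.inr h
  have hfac : M = J * Matrix.fromBlocks Bᵀ D 0 B := by
    rw [hMblocks]
    simp [J, Matrix.fromBlocks_multiply]
  have hdetMB : M.det = J.det * B.det ^ 2 := by
    rw [hfac, Matrix.det_mul, Matrix.det_fromBlocks_zero₂₁, Matrix.det_transpose]; ring
  have hP2 : P.det ^ 2 = 1 := by
    rcases Int.isUnit_iff.mp hPunit with h | h <;> rw [h] <;> ring
  have hfinal : (V + Vᵀ).det = J.det * B.det ^ 2 := by
    rw [← hdetMB, hdetM, hdetWV, hP2, one_mul]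
  have hsq : ((V + Vᵀ).det).natAbs = B.det.natAbs ^ 2 := by
    rw [hfinal]
    rcases hJdet with h | h <;> rw [h] <;> simp [Int.natAbs_pow]
  refine ⟨B.det.natAbs, ?_, hsq⟩
  have h1 : Odd (((V + Vᵀ).det).natAbs) := Int.natAbs_odd.mpr hodd
  rw [hsq, Nat.odd_iff, Nat.pow_mod] at h1
  rw [Nat.odd_iff]
  rcases Nat.mod_two_eq_zero_or_one B.det.natAbs with h | h <;> rw [h] at h1 <;> simp_all
end

section
/- For every unit complex number ω ≠ 1 and every even integer s, there exists an abstract Seifert matrix V (integer square matrix with V − Vᵀ unimodular) such that the Hermitian matrix V_ω = (1/2)(1−ω)V + (1/2)(1−conj(ω))Vᵀ is nonsingular and has signature exactly s. (Hence for each ω ≠ 1 the Levine–Tristram signature σ_ω maps the algebraic concordance group onto 2ℤ; the examples can be taken to be block sums of the twist-knot Seifert matrices [[1, 1], [0, b]] and their negatives.) -/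
open Matrix Polynomial
open scoped ComplexOrder

lemma omegaForm_isHermitian {m : ℕ} (V : Matrix (Fin m) (Fin m) ℤ) (ω : ℂ) :
    (omegaForm V ω).IsHermitian := by
  unfold Matrix.IsHermitian
  ext i j
  simp [omegaForm, Matrix.conjTranspose_apply, Matrix.add_apply, Matrix.smul_apply,
    _root_.map_mul, Matrix.map_apply, map_ofNat]
  ring

lemma omegaForm_neg {m : ℕ} (V : Matrix (Fin m) (Fin m) ℤ) (ω : ℂ) :
    omegaForm (-V) ω = -(omegaForm V ω) := by
  ext i j
  simp [omegaForm]
  ring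

lemma omegaForm_nsum (B : Matrix (Fin 2) (Fin 2) ℤ) (g : ℕ) (ω : ℂ) :
    omegaForm (nsum B g) ω = (Matrix.reindex finProdFinEquiv finProdFinEquiv)
      (Matrix.blockDiagonal fun _ : Fin g => omegaForm B ω) := by
  ext i j
  simp only [omegaForm, nsum, Matrix.reindex_apply, Matrix.submatrix_apply,
    Matrix.add_apply, Matrix.smul_apply, Matrix.map_apply, Matrix.transpose_apply,
    Matrix.blockDiagonal_apply, Equiv.symm_apply_apply]
  by_cases h : (finProdFinEquiv.symm i).2 = (finProdFinEquiv.symm j).2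
  · have h2 : Fin.modNat i = Fin.modNat j := h
    simp [h2]
  · rw [if_neg h, if_neg h, if_neg (fun e => h e.symm)]
    simp

lemma nsum_sub_transpose (B : Matrix (Fin 2) (Fin 2) ℤ) (g : ℕ) :
    nsum B g - (nsum B g)ᵀ = (Matrix.reindex finProdFinEquiv finProdFinEquiv)
      (Matrix.blockDiagonal fun _ : Fin g => B - Bᵀ) := by
  ext i j
  simp only [nsum, Matrix.sub_apply, Matrix.reindex_apply, Matrix.submatrix_apply,
    Matrix.transpose_apply, Matrix.blockDiagonal_apply]
  by_cases h : (finProdFinEquiv.symm i).2 = (finProdFinEquiv.symm j).2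
  · have h2 : Fin.modNat i = Fin.modNat j := h
    simp [h2]
  · rw [if_neg h, if_neg h, if_neg (fun e => h e.symm)]
    simp

lemma dot_blockDiagonal {g : ℕ} (f : Fin g → Matrix (Fin 2) (Fin 2) ℂ) (y : Fin 2 × Fin g → ℂ) :
    star y ⬝ᵥ (Matrix.blockDiagonal f *ᵥ y) =
      ∑ k : Fin g, star (fun i => y (i, k)) ⬝ᵥ (f k *ᵥ fun i => y (i, k)) := by
  simp only [dotProduct, Matrix.mulVec, Matrix.blockDiagonal_apply, Pi.star_apply,
    Fintype.sum_prod_type, ite_mul, zero_mul]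
  rw [Finset.sum_comm]
  refine Finset.sum_congr rfl fun k _ => Finset.sum_congr rfl fun i _ => ?_
  congr 1
  rw [Finset.sum_comm]
  simp

lemma re_lt_one (ω : ℂ) (hω : ‖ω‖ = 1) (hω1 : ω ≠ 1) : ω.re < 1 := by
  have hnsω : Complex.normSq ω = 1 := by
    rw [← Complex.sq_norm, hω]; norm_num
  rcases lt_or_eq_of_le (Complex.re_le_norm ω) with h | h
  · rw [hω] at h; exact h
  · exfalso
    apply hω1
    have him : ω.im = 0 := by
      have := Complex.normSq_apply ω
      nlinarith [Complex.sq_norm ω]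
    exact Complex.ext (by rw [show (1 : ℂ).re = 1 from rfl, h, hω]) him

lemma block_posDef (ω : ℂ) (hω : ‖ω‖ = 1) (hω1 : ω ≠ 1)
    {b : ℤ} (hb : 1 / 2 < (b : ℝ) * (1 - ω.re)) :
    (omegaForm !![1, 1; 0, b] ω).PosDef := by
  set r : ℝ := 1 - ω.re with hrdef
  have hnsω : Complex.normSq ω = 1 := by
    rw [← Complex.sq_norm, hω]; norm_num
  have hre1 : ω.re < 1 := re_lt_one ω hω hω1
  have hr : 0 < r := by simp [hrdef]; linarith
  set a : ℂ := (1 - ω) / 2 with hadef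
  have hωc : ω * (starRingEnd ℂ) ω = 1 := by
    rw [Complex.mul_conj, hnsω]; norm_num
  have hreω : ω + (starRingEnd ℂ) ω = 2 * (ω.re : ℂ) := by
    rw [Complex.add_conj]; push_cast; ring
  have hca : (starRingEnd ℂ) a = (1 - (starRingEnd ℂ) ω) / 2 := by
    simp [hadef, map_ofNat]
  have har : a + (starRingEnd ℂ) a = (r : ℂ) := by
    rw [hca, hadef]
    push_cast [hrdef]
    linear_combination (-1/2 : ℂ) * hreω
  refine Matrix.PosDef.of_dotProduct_mulVec_pos (omegaForm_isHermitian _ _) fun x hx => ?_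
  have hM : omegaForm !![1, 1; 0, b] ω = !![(r : ℂ), a; (starRingEnd ℂ) a, (r : ℂ) * b] := by
    ext i j
    rw [← har]
    fin_cases i <;> fin_cases j <;>
      simp [omegaForm, hca, hadef, Matrix.vecHead, Matrix.vecTail, map_ofNat] <;> ring
  have hQF : (r : ℂ) * (star x ⬝ᵥ (omegaForm !![1, 1; 0, b] ω *ᵥ x)) =
      ((Complex.normSq ((r : ℂ) * x 0 + a * x 1) +
        ((b : ℝ) * r ^ 2 - r / 2) * Complex.normSq (x 1) : ℝ) : ℂ) := by
    rw [hM, Complex.ofReal_add, Complex.ofReal_mul, ← Complex.mul_conj, ← Complex.mul_conj]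
    simp [dotProduct, Matrix.mulVec, Fin.sum_univ_two, Complex.star_def,
      Complex.conj_ofReal, hca, hadef, map_ofNat]
    rw [hrdef]
    push_cast
    linear_combination (-(x 1 * (starRingEnd ℂ) (x 1)) / 4) * hωc +
      ((x 1 * (starRingEnd ℂ) (x 1)) / 4) * hreω
  have hpos : 0 < Complex.normSq ((r : ℂ) * x 0 + a * x 1) +
      ((b : ℝ) * r ^ 2 - r / 2) * Complex.normSq (x 1) := by
    have hc : 0 < (b : ℝ) * r ^ 2 - r / 2 := by nlinarith
    by_cases h1 : x 1 = 0
    · have h0 : x 0 ≠ 0 := by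
        intro h0
        apply hx
        funext i
        fin_cases i <;> assumption
      have hne : ((r : ℂ) * x 0 + a * x 1) ≠ 0 := by
        rw [h1]
        simpa using mul_ne_zero (Complex.ofReal_ne_zero.mpr hr.ne') h0
      have := Complex.normSq_pos.mpr hne
      nlinarith [Complex.normSq_nonneg (x 1)]
    · have := Complex.normSq_pos.mpr h1
      nlinarith [Complex.normSq_nonneg ((r : ℂ) * x 0 + a * x 1)]
  have heq : star x ⬝ᵥ (omegaForm !![1, 1; 0, b] ω *ᵥ x) =
      (((Complex.normSq ((r : ℂ) * x 0 + a * x 1) +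
        ((b : ℝ) * r ^ 2 - r / 2) * Complex.normSq (x 1)) / r : ℝ) : ℂ) := by
    rw [Complex.ofReal_div]
    rw [eq_div_iff (Complex.ofReal_ne_zero.mpr hr.ne')]
    rw [mul_comm] at hQF
    exact hQF
  rw [heq]
  rw [show ((0 : ℂ) = ((0 : ℝ) : ℂ)) by norm_num, Complex.real_lt_real]
  positivity

lemma nsum_posDef (ω : ℂ) (B : Matrix (Fin 2) (Fin 2) ℤ) (g : ℕ)
    (hblock : (omegaForm B ω).PosDef) : (omegaForm (nsum B g) ω).PosDef := by
  refine Matrix.PosDef.of_dotProduct_mulVec_pos (omegaForm_isHermitian _ _) fun x hx => ?_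
  rw [omegaForm_nsum, Matrix.reindex_apply, Matrix.submatrix_mulVec_equiv,
    dotProduct_comp_equiv_symm]
  simp only [Equiv.symm_symm]
  have hstar : star x ∘ ⇑finProdFinEquiv = star (x ∘ ⇑finProdFinEquiv) := rfl
  rw [hstar, dot_blockDiagonal]
  obtain ⟨i, hi⟩ := Function.ne_iff.mp hx
  set p := finProdFinEquiv.symm i with hp
  have hyp : (x ∘ ⇑finProdFinEquiv) p ≠ 0 := by
    simp only [hp, Function.comp_apply, Equiv.apply_symm_apply]
    exact hi
  refine Finset.sum_pos' (fun k _ => hblock.posSemidef.dotProduct_mulVec_nonneg _) ⟨p.2, Finset.mem_univ _, ?_⟩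
  refine hblock.dotProduct_mulVec_pos (Function.ne_iff.mpr ⟨p.1, ?_⟩)
  simpa using hyp

lemma seifert_nsum (b : ℤ) (g : ℕ) : SeifertMatrix (nsum !![1, 1; 0, b] g) := by
  left
  rw [nsum_sub_transpose, Matrix.det_reindex_self, Matrix.det_blockDiagonal]
  have h : (!![1, 1; 0, b] - !![1, 1; 0, b]ᵀ : Matrix (Fin 2) (Fin 2) ℤ).det = 1 := by
    simp [Matrix.det_fin_two, Matrix.vecHead, Matrix.vecTail]
  simp only [h, Finset.prod_const, one_pow]

lemma seifert_neg {m : ℕ} {V : Matrix (Fin m) (Fin m) ℤ} (h : SeifertMatrix V)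
    (hm : Even m) : SeifertMatrix (-V) := by
  have heq : (-V) - (-V)ᵀ = -(V - Vᵀ) := by
    ext i j; simp; ring
  unfold SeifertMatrix at *
  rw [heq, Matrix.det_neg, Fintype.card_fin, hm.neg_one_pow, one_mul]
  exact h

/-- for every unit complex number `ω ≠ 1` and every even integer `s` there
is an abstract Seifert matrix `V` whose hermitian form `V_ω` is nonsingular and has
signature exactly `s`: the Levine–Tristram signature `σ_ω` maps the algebraic concordance
group onto `2ℤ`. -/
theorem stmt_15 (ω : ℂ) (hω : ‖ω‖ = 1) (hω1 : ω ≠ 1)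
    (s : ℤ) (hs : Even s) :
    ∃ (g : ℕ) (V : Matrix (Fin (2 * g)) (Fin (2 * g)) ℤ), SeifertMatrix V ∧
      (omegaForm V ω).det ≠ 0 ∧
      ∃ hHerm : (omegaForm V ω).IsHermitian,
        ((Finset.univ.filter fun i => 0 < hHerm.eigenvalues i).card : ℤ) -
          ((Finset.univ.filter fun i => hHerm.eigenvalues i < 0).card : ℤ) = s := by
  have hre1 := re_lt_one ω hω hω1
  have hr : (0 : ℝ) < 1 - ω.re := by linarith
  obtain ⟨b, hb⟩ := exists_int_gt (1 / (2 * (1 - ω.re)))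
  have hbr : 1 / 2 < (b : ℝ) * (1 - ω.re) := by
    rw [div_lt_iff₀ (by positivity)] at hb
    nlinarith
  have hPD2 := block_posDef ω hω hω1 hbr
  obtain ⟨k, hk⟩ := hs
  rcases le_or_gt 0 k with hkpos | hkneg
  · -- positive (or zero) signature
    set g := k.toNat with hg
    have hPD := nsum_posDef ω !![1, 1; 0, b] g hPD2
    refine ⟨g, nsum !![1, 1; 0, b] g, seifert_nsum b g, hPD.det_pos.ne', hPD.1, ?_⟩
    have h1 : (Finset.univ.filter fun i => 0 < hPD.1.eigenvalues i) = Finset.univ :=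
      Finset.filter_true_of_mem fun i _ => hPD.eigenvalues_pos i
    have h2 : (Finset.univ.filter fun i => hPD.1.eigenvalues i < 0) = ∅ :=
      Finset.filter_false_of_mem fun i _ => asymm (hPD.eigenvalues_pos i)
    rw [h1, h2]
    simp only [Finset.card_univ, Fintype.card_fin, Finset.card_empty]
    omega
  · -- negative signature
    set g := (-k).toNat with hg
    have hPD := nsum_posDef ω !![1, 1; 0, b] g hPD2
    have hHerm : (omegaForm (-(nsum !![1, 1; 0, b] g)) ω).IsHermitian :=
      omegaForm_isHermitian _ ω
    have hdet : (omegaForm (-(nsum !![1, 1; 0, b] g)) ω).det ≠ 0 := by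
      rw [omegaForm_neg, Matrix.det_neg, Fintype.card_fin]
      have : ((-1 : ℂ)) ^ (2 * g) = 1 := (even_two_mul g).neg_one_pow
      rw [this, one_mul]
      exact hPD.det_pos.ne'
    have hev : ∀ i, hHerm.eigenvalues i < 0 := by
      intro i
      have h := hHerm.eigenvalues_eq i
      set v : Fin (2 * g) → ℂ :=
        (hHerm.eigenvectorBasis i).ofLp with hvdef
      have h2 : hHerm.eigenvalues i =
          -RCLike.re (star v ⬝ᵥ omegaForm (nsum !![1, 1; 0, b] g) ω *ᵥ v) := by
        rw [h, omegaForm_neg, Matrix.neg_mulVec, dotProduct_neg, map_neg]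
      have hv : v ≠ 0 := by
        intro h0
        apply hHerm.eigenvectorBasis.orthonormal.ne_zero i
        apply (WithLp.equiv 2 (Fin (2 * g) → ℂ)).injective
        exact h0
      have := hPD.re_dotProduct_pos hv
      rw [h2]
      linarith
    refine ⟨g, -(nsum !![1, 1; 0, b] g),
      seifert_neg (seifert_nsum b g) (even_two_mul g), hdet, hHerm, ?_⟩
    have h1 : (Finset.univ.filter fun i => 0 < hHerm.eigenvalues i) = ∅ :=
      Finset.filter_false_of_mem fun i _ => asymm (hev i)
    have h2 : (Finset.univ.filter fun i => hHerm.eigenvalues i < 0) = Finset.univ :=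
      Finset.filter_true_of_mem fun i _ => hev i
    rw [h1, h2]
    simp only [Finset.card_univ, Fintype.card_fin, Finset.card_empty]
    omega
end
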